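/- arXiv:2007.09692 — 4 statements merged into one kernel-verified Lean document; each statement's English description precedes it below -/
import Mathlib

section
/- Let A : [0,∞) → ℝ^{n×n} and a : [0,∞) → ℝⁿ be (Bochner/Lebesgue) integrable on [0,∞). Then for every z ∈ C_lim([0,∞), ℝⁿ) and every τ ∈ [0,∞] there exists a unique x ∈ C_lim([0,∞), ℝⁿ) satisfying x(t) = z(t) + ∫_τ^t (A(s) x(s) + a(s)) ds for all t ∈ [0,∞) (and in the limit t → ∞). -/
/-!
Extend the data from `[0,∞)` to `ℝ` (`A` and `a` by zero, `z` by `z 0`), so that the operator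
`Q x = z + ∫_τ^· (A x + a)` acts on the Banach space `ℝ →ᵇ ℝⁿ`; solutions on `[0,∞)` extended
by their value at `0` are exactly the fixed points of `Q`. With `g = ‖A‖` and
`D t = |∫_τ^t g|`, the function `D` is absolutely continuous with `D' = ±g` on the domain of
integration, so the fundamental theorem of calculus gives `∫ g D^k = D(t)^(k+1) / (k+1)` there.
Hence `|Q^k u - Q^k v|(t) ≤ D(t)^k / k! · ‖u - v‖ ≤ c₀^k / k! · ‖u - v‖`, some iterate of `Q`
is a contraction, and `Q` has exactly one fixed point (Weissinger).
-/

open MeasureTheory Filter Topology Set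
open scoped ENNReal

-- The integral `∫_τ^t (A(s) x(s) + a(s)) ds`, for a base point `τ ∈ [0,∞]`
-- (for `τ = ∞` it is interpreted as `-∫_t^∞`).
open Classical in
noncomputable def volterraInt (n : ℕ)
    (A : ℝ → (EuclideanSpace ℝ (Fin n) →L[ℝ] EuclideanSpace ℝ (Fin n)))
    (a : ℝ → EuclideanSpace ℝ (Fin n)) (τ : ℝ≥0∞)
    (x : ℝ → EuclideanSpace ℝ (Fin n)) (t : ℝ) : EuclideanSpace ℝ (Fin n) :=
  if τ = ⊤ then -(∫ s in Set.Ioi t, (A s (x s) + a s))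
  else ∫ s in τ.toReal..t, (A s (x s) + a s)

open scoped Interval BoundedContinuousFunction Nat

theorem AbsolutelyContinuousOnInterval.pow {G : ℝ → ℝ} {a b : ℝ}
    (hG : AbsolutelyContinuousOnInterval G a b) :
    ∀ n : ℕ, AbsolutelyContinuousOnInterval (fun s => G s ^ n) a b
  | 0 => by
    simpa using
      (LipschitzWith.const (α := ℝ) (1 : ℝ)).lipschitzOnWith.absolutelyContinuousOnInterval
  | n + 1 => by simpa only [pow_succ] using (hG.pow n).fun_mul hG

theorem AbsolutelyContinuousOnInterval.integral_mul_pow_eq_of_hasDerivAt {G g : ℝ → ℝ} {a b : ℝ}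
    (hG : AbsolutelyContinuousOnInterval G a b)
    (hG' : ∀ᵐ s, s ∈ uIcc a b → HasDerivAt G (g s) s) (k : ℕ) :
    ∫ s in a..b, g s * G s ^ k = (G b ^ (k + 1) - G a ^ (k + 1)) / (k + 1) := by
  rw [eq_div_iff (by positivity), ← intervalIntegral.integral_mul_const,
    ← (hG.pow (k + 1)).integral_deriv_eq_sub]
  refine intervalIntegral.integral_congr_ae ?_
  filter_upwards [hG'] with s hs hsab
  rw [((hs (uIoc_subset_uIcc hsab)).fun_pow (k + 1)).deriv]
  push_cast
  ring

namespace Volterra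

section integralFrom

variable {E : Type*} [NormedAddCommGroup E] [NormedSpace ℝ E] (τ : ℝ≥0∞) {f g : ℝ → E}

-- `volterraInt n A a τ x` unfolds to `integralFrom τ fun s => A s (x s) + a s`.
open Classical in
noncomputable def integralFrom (f : ℝ → E) (t : ℝ) : E :=
  if τ = ⊤ then -∫ s in Ioi t, f s else ∫ s in τ.toReal..t, f s

open Classical in
def integrationSet (t : ℝ) : Set ℝ :=
  if τ = ⊤ then Ioi t else Ι τ.toReal t

theorem measurableSet_integrationSet (t : ℝ) : MeasurableSet (integrationSet τ t) := by
  unfold integrationSet; split_ifs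
  exacts [measurableSet_Ioi, measurableSet_uIoc]

theorem integrationSet_subset_Ioi {t : ℝ} (ht : 0 ≤ t) : integrationSet τ t ⊆ Ioi 0 := by
  unfold integrationSet; split_ifs
  · exact Ioi_subset_Ioi ht
  · exact fun s hs => (le_min ENNReal.toReal_nonneg ht).trans_lt hs.1

theorem integralFrom_eq_add (hf : Integrable f) (u t : ℝ) :
    integralFrom τ f t = integralFrom τ f u + ∫ s in u..t, f s := by
  unfold integralFrom; split_ifs
  · rw [← intervalIntegral.integral_Ioi_sub_Ioi' hf.integrableOn hf.integrableOn]; abel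
  · rw [intervalIntegral.integral_add_adjacent_intervals hf.intervalIntegrable
      hf.intervalIntegrable]

theorem continuous_integralFrom (hf : Integrable f) : Continuous (integralFrom τ f) := by
  rw [funext (integralFrom_eq_add τ hf 0)]
  exact continuous_const.add (hf.continuous_primitive 0)

theorem tendsto_integralFrom (hf : Integrable f) :
    Tendsto (integralFrom τ f) atTop (𝓝 (integralFrom τ f 0 + ∫ s in Ioi 0, f s)) :=
  (tendsto_congr (integralFrom_eq_add τ hf 0)).2 <|
    tendsto_const_nhds.add (intervalIntegral_tendsto_integral_Ioi 0 hf.integrableOn tendsto_id)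

theorem integralFrom_eq_of_nonpos (hf : Integrable f) (hf0 : EqOn f 0 (Iic 0)) {t : ℝ}
    (ht : t ≤ 0) : integralFrom τ f t = integralFrom τ f 0 := by
  rw [integralFrom_eq_add τ hf 0 t, intervalIntegral.integral_zero_ae, add_zero]
  exact ae_of_all _ fun s hs => hf0 (uIoc_of_ge ht ▸ hs).2

theorem integralFrom_congr {t : ℝ} (h : EqOn f g (integrationSet τ t)) :
    integralFrom τ f t = integralFrom τ g t := by
  unfold integralFrom integrationSet at *; split_ifs at h ⊢
  · rw [setIntegral_congr_fun measurableSet_Ioi h]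
  · exact intervalIntegral.integral_congr_ae (ae_of_all _ h)

theorem integralFrom_sub (hf : Integrable f) (hg : Integrable g) (t : ℝ) :
    integralFrom τ (f - g) t = integralFrom τ f t - integralFrom τ g t := by
  unfold integralFrom; split_ifs
  · rw [Pi.sub_def, integral_sub hf.integrableOn hg.integrableOn]; abel
  · exact intervalIntegral.integral_sub hf.intervalIntegrable hg.intervalIntegrable

theorem norm_integralFrom_le (f : ℝ → E) (t : ℝ) :
    ‖integralFrom τ f t‖ ≤ ∫ s in integrationSet τ t, ‖f s‖ := by
  unfold integralFrom integrationSet; split_ifs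
  · rw [norm_neg]; exact norm_integral_le_integral_norm _
  · exact intervalIntegral.norm_integral_le_integral_norm_uIoc

theorem norm_integralFrom_le_integral_norm (hf : Integrable f) (t : ℝ) :
    ‖integralFrom τ f t‖ ≤ ∫ s, ‖f s‖ :=
  (norm_integralFrom_le τ f t).trans
    (setIntegral_le_integral hf.norm (ae_of_all _ fun _ => norm_nonneg _))

theorem ae_hasDerivAt_integralFrom [CompleteSpace E] (hf : Integrable f) :
    ∀ᵐ s, HasDerivAt (integralFrom τ f) (f s) s := by
  filter_upwards [LocallyIntegrable.ae_hasDerivAt_integral hf.locallyIntegrable] with s hs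
  rw [funext (integralFrom_eq_add τ hf 0)]
  exact (hs 0).const_add _

end integralFrom

section primitivePowers

variable {g : ℝ → ℝ} (hg : Integrable g) (τ : ℝ≥0∞) (k : ℕ)
include hg

theorem absolutelyContinuousOnInterval_integralFrom (a b : ℝ) :
    AbsolutelyContinuousOnInterval (integralFrom τ g) a b := by
  rw [funext (integralFrom_eq_add τ hg a)]
  exact (LipschitzWith.const _).lipschitzOnWith.absolutelyContinuousOnInterval.fun_add
    (hg.intervalIntegrable.absolutelyContinuousOnInterval_intervalIntegral left_mem_uIcc)

theorem integral_mul_integralFrom_pow (a b : ℝ) :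
    ∫ s in a..b, g s * integralFrom τ g s ^ k
      = (integralFrom τ g b ^ (k + 1) - integralFrom τ g a ^ (k + 1)) / (k + 1) :=
  (absolutelyContinuousOnInterval_integralFrom hg τ a b).integral_mul_pow_eq_of_hasDerivAt
    ((ae_hasDerivAt_integralFrom τ hg).mono fun _ hs _ => hs) k

theorem integral_mul_neg_integralFrom_pow (a b : ℝ) :
    ∫ s in a..b, g s * (-integralFrom τ g s) ^ k
      = ((-integralFrom τ g a) ^ (k + 1) - (-integralFrom τ g b) ^ (k + 1)) / (k + 1) := by
  have := (absolutelyContinuousOnInterval_integralFrom hg τ a b).fun_neg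
    |>.integral_mul_pow_eq_of_hasDerivAt
      ((ae_hasDerivAt_integralFrom τ hg).mono fun _ hs _ => hs.neg) k
  simp only [neg_mul, intervalIntegral.integral_neg] at this
  linear_combination -this

theorem integrable_mul_abs_integralFrom_pow :
    Integrable fun s => g s * |integralFrom τ g s| ^ k := by
  refine hg.mul_bdd (c := (∫ s, ‖g s‖) ^ k)
    ((continuous_integralFrom τ hg).abs.pow k).aestronglyMeasurable (ae_of_all _ fun s => ?_)
  rw [norm_pow, Real.norm_eq_abs, abs_abs]
  exact pow_le_pow_left₀ (abs_nonneg _) (norm_integralFrom_le_integral_norm τ hg s) k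

theorem integral_integrationSet_mul_abs_pow (hg0 : 0 ≤ g) (t : ℝ) :
    ∫ s in integrationSet τ t, g s * |integralFrom τ g s| ^ k
      = |integralFrom τ g t| ^ (k + 1) / (k + 1) := by
  by_cases hτ : τ = ⊤
  · -- integrate over `t..b` and let `b → ∞`, using `integralFrom ⊤ g b → 0`
    subst hτ
    have hP_nonpos (s : ℝ) : integralFrom ⊤ g s ≤ 0 := by
      simpa [integralFrom] using setIntegral_nonneg measurableSet_Ioi fun r _ => hg0 r
    have hP_lim : Tendsto (integralFrom ⊤ g) atTop (𝓝 0) := by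
      simpa [integralFrom] using tendsto_integralFrom ⊤ hg
    have hint := (integrable_mul_abs_integralFrom_pow hg ⊤ k).integrableOn (s := Ioi t)
    simp only [integrationSet, if_true, abs_of_nonpos (hP_nonpos _)] at hint ⊢
    refine tendsto_nhds_unique (intervalIntegral_tendsto_integral_Ioi t hint tendsto_id) ?_
    simp only [id, integral_mul_neg_integralFrom_pow hg]
    simpa using ((hP_lim.neg.pow (k + 1)).const_sub _).div_const ((k : ℝ) + 1)
  have hPτ : integralFrom τ g τ.toReal = 0 := by simp [integralFrom, hτ]
  simp only [integrationSet, hτ, if_false]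
  rcases le_total τ.toReal t with h | h
  · have hP_nonneg {s : ℝ} (hs : τ.toReal ≤ s) : 0 ≤ integralFrom τ g s := by
      simpa [integralFrom, hτ] using intervalIntegral.integral_nonneg hs fun r _ => hg0 r
    rw [uIoc_of_le h, ← intervalIntegral.integral_of_le h, abs_of_nonneg (hP_nonneg h),
      intervalIntegral.integral_congr (g := fun s => g s * integralFrom τ g s ^ k)
        fun s hs => by rw [abs_of_nonneg (hP_nonneg (uIcc_of_le h ▸ hs).1)],
      integral_mul_integralFrom_pow hg, hPτ]
    simp
  · have hP_nonpos {s : ℝ} (hs : s ≤ τ.toReal) : integralFrom τ g s ≤ 0 := by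
      simpa [integralFrom, hτ, intervalIntegral.integral_symm τ.toReal s] using
        intervalIntegral.integral_nonneg hs fun r _ => hg0 r
    rw [uIoc_of_ge h, ← intervalIntegral.integral_of_le h, abs_of_nonpos (hP_nonpos h),
      intervalIntegral.integral_congr (g := fun s => g s * (-integralFrom τ g s) ^ k)
        fun s hs => by rw [abs_of_nonpos (hP_nonpos (uIcc_of_le h ▸ hs).2)],
      integral_mul_neg_integralFrom_pow hg, hPτ]
    simp

end primitivePowers

section iterates

variable {E : Type*} [NormedAddCommGroup E] {g : ℝ → ℝ} (hg : Integrable g) (hg0 : 0 ≤ g)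
  (τ : ℝ≥0∞) {Φ : (ℝ →ᵇ E) → ℝ →ᵇ E}
  (hΦ : ∀ u v t, dist (Φ u t) (Φ v t) ≤ ∫ s in integrationSet τ t, g s * dist (u s) (v s))
include hg hg0 hΦ

theorem dist_iterate_apply_le (u v : ℝ →ᵇ E) (k : ℕ) (t : ℝ) :
    dist ((Φ^[k] u) t) ((Φ^[k] v) t) ≤ |integralFrom τ g t| ^ k / k ! * dist u v := by
  induction k generalizing t with
  | zero => simpa using BoundedContinuousFunction.dist_coe_le_dist t
  | succ k ih =>
    set d := dist u v
    have hdist_int : Integrable fun s => g s * dist ((Φ^[k] u) s) ((Φ^[k] v) s) :=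
      hg.mul_bdd (c := dist (Φ^[k] u) (Φ^[k] v))
        ((Φ^[k] u).continuous.dist (Φ^[k] v).continuous).aestronglyMeasurable
        (ae_of_all _ fun s => by
          rw [Real.norm_of_nonneg dist_nonneg]; exact BoundedContinuousFunction.dist_coe_le_dist s)
    rw [Function.iterate_succ_apply', Function.iterate_succ_apply']
    calc dist (Φ (Φ^[k] u) t) (Φ (Φ^[k] v) t)
        ≤ ∫ s in integrationSet τ t, g s * dist ((Φ^[k] u) s) ((Φ^[k] v) s) := hΦ _ _ t
      _ ≤ ∫ s in integrationSet τ t, g s * |integralFrom τ g s| ^ k * (d / k !) := by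
          refine setIntegral_mono_on hdist_int.integrableOn
            ((integrable_mul_abs_integralFrom_pow hg τ k).mul_const _).integrableOn
            (measurableSet_integrationSet τ t) fun s _ => ?_
          rw [mul_assoc]
          exact mul_le_mul_of_nonneg_left ((ih s).trans_eq (by ring)) (hg0 s)
      _ = |integralFrom τ g t| ^ (k + 1) / (k + 1)! * d := by
          rw [integral_mul_const, integral_integrationSet_mul_abs_pow hg τ k hg0,
            Nat.factorial_succ]
          push_cast
          field_simp

theorem exists_contractingWith_iterate : ∃ m, ∃ K, ContractingWith K Φ^[m] := by
  obtain ⟨m, hm⟩ := ((FloorSemiring.tendsto_pow_div_factorial_atTop (∫ s, g s)).eventually_lt_const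
    one_pos).exists
  have hK : 0 ≤ (∫ s, g s) ^ m / m ! := by have := integral_nonneg (μ := volume) hg0; positivity
  refine ⟨m, ⟨_, hK⟩, hm, LipschitzWith.of_dist_le_mul fun u v => ?_⟩
  refine (BoundedContinuousFunction.dist_le (by positivity)).2 fun t => ?_
  refine (dist_iterate_apply_le hg hg0 τ hΦ u v m t).trans ?_
  have : |integralFrom τ g t| ≤ ∫ s, g s := by
    simpa [Real.norm_of_nonneg (hg0 _)] using norm_integralFrom_le_integral_norm τ hg t
  show _ ≤ (∫ s, g s) ^ m / m ! * dist u v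
  gcongr

theorem existsUnique_isFixedPt [CompleteSpace E] : ∃! x, Function.IsFixedPt Φ x := by
  obtain ⟨m, K, hK⟩ := exists_contractingWith_iterate hg hg0 τ hΦ
  exact ⟨_, hK.isFixedPt_fixedPoint_iterate, fun y hy => hK.fixedPoint_unique (hy.iterate m)⟩

end iterates

theorem exists_boundedContinuousFunction_comp_max {E : Type*} [NormedAddCommGroup E]
    {f : ℝ → E} (hf : ContinuousOn f (Ici 0)) {L : E} (hL : Tendsto f atTop (𝓝 L)) :
    ∃ F : ℝ →ᵇ E, ∀ t, F t = f (max t 0) := by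
  obtain ⟨T, hT⟩ := (hL.eventually (Metric.closedBall_mem_nhds L one_pos)).exists_forall_of_atTop
  have hbdd : Bornology.IsBounded (range fun t => f (max t 0)) := by
    refine (((isCompact_Icc (a := 0) (b := max T 0)).image_of_continuousOn
      (hf.mono Icc_subset_Ici_self)).isBounded.union
        (Metric.isBounded_closedBall (x := L) (r := 1))).subset ?_
    rintro _ ⟨t, rfl⟩
    by_cases h : max t 0 ≤ max T 0
    · exact Or.inl ⟨max t 0, ⟨le_max_right t 0, h⟩, rfl⟩
    · exact Or.inr (hT _ ((le_max_left T 0).trans (not_le.1 h).le))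
  exact ⟨⟨⟨_, hf.comp_continuous (continuous_id.max continuous_const) fun t => le_max_right t 0⟩,
    Metric.isBounded_range_iff.1 hbdd⟩, fun _ => rfl⟩

section volterraMap

variable {E : Type*} [NormedAddCommGroup E] [NormedSpace ℝ E]
  {A : ℝ → E →L[ℝ] E} {a : ℝ → E} (τ : ℝ≥0∞)

theorem integrable_apply_add (hA : Integrable A) (ha : Integrable a) (x : ℝ →ᵇ E) :
    Integrable fun s => A s (x s) + a s :=
  ((hA.norm.mul_const ‖x‖).mono'
    (isBoundedBilinearMap_apply.continuous.comp_aestronglyMeasurable₂ hA.aestronglyMeasurable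
      x.continuous.aestronglyMeasurable)
    (ae_of_all _ fun s => (A s).le_opNorm_of_le (x.norm_coe_le_norm s))).add ha

noncomputable def volterraMap (z : ℝ →ᵇ E) (hA : Integrable A) (ha : Integrable a)
    (x : ℝ →ᵇ E) : ℝ →ᵇ E :=
  z + .ofNormedAddCommGroup (integralFrom τ fun s => A s (x s) + a s)
    (continuous_integralFrom τ (integrable_apply_add hA ha x)) _
    (norm_integralFrom_le_integral_norm τ (integrable_apply_add hA ha x))

theorem volterraMap_apply {z : ℝ →ᵇ E} (hA : Integrable A) (ha : Integrable a) (x : ℝ →ᵇ E)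
    (t : ℝ) : volterraMap τ z hA ha x t = z t + integralFrom τ (fun s => A s (x s) + a s) t :=
  rfl

theorem dist_volterraMap_apply_le {z : ℝ →ᵇ E} (hA : Integrable A) (ha : Integrable a)
    (u v : ℝ →ᵇ E) (t : ℝ) :
    dist (volterraMap τ z hA ha u t) (volterraMap τ z hA ha v t)
      ≤ ∫ s in integrationSet τ t, ‖A s‖ * dist (u s) (v s) := by
  have hu := integrable_apply_add hA ha u
  have hv := integrable_apply_add hA ha v
  rw [volterraMap_apply, volterraMap_apply, dist_add_left, dist_eq_norm,
    ← integralFrom_sub τ hu hv]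
  refine (norm_integralFrom_le τ _ t).trans (setIntegral_mono_on (hu.sub hv).norm.integrableOn
    (hA.norm.mul_bdd (c := dist u v) (u.continuous.dist v.continuous).aestronglyMeasurable
      (ae_of_all _ fun s => ?_)).integrableOn (measurableSet_integrationSet τ t) fun s _ => ?_)
  · rw [Real.norm_of_nonneg dist_nonneg]
    exact BoundedContinuousFunction.dist_coe_le_dist s
  · rw [Pi.sub_apply, add_sub_add_right_eq_sub, ← map_sub, dist_eq_norm]
    exact (A s).le_opNorm _

end volterraMap

section halfLine

variable {E : Type*} [NormedAddCommGroup E] [NormedSpace ℝ E]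
  {A : ℝ → E →L[ℝ] E} {a : ℝ → E} (τ : ℝ≥0∞) {z : ℝ → E}

def IsVolterraSolution (A : ℝ → E →L[ℝ] E) (a z x : ℝ → E) : Prop :=
  ContinuousOn x (Ici 0) ∧ (∃ L, Tendsto x atTop (𝓝 L)) ∧
    ∀ t ≥ (0 : ℝ), x t = z t + integralFrom τ (fun s => A s (x s) + a s) t

variable {z' : ℝ →ᵇ E} (hz' : ∀ t, z' t = z (max t 0))
  (hA : Integrable ((Ioi 0).indicator A)) (ha : Integrable ((Ioi 0).indicator a))
include hz'

theorem volterraMap_indicator_apply_of_nonneg {x : ℝ →ᵇ E} {y : ℝ → E} (hxy : EqOn x y (Ioi 0))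
    {t : ℝ} (ht : 0 ≤ t) :
    volterraMap τ z' hA ha x t = z t + integralFrom τ (fun s => A s (y s) + a s) t := by
  rw [volterraMap_apply, hz', max_eq_left ht]
  refine congrArg _ (integralFrom_congr τ fun s hs => ?_)
  have hs0 := integrationSet_subset_Ioi τ ht hs
  simp only [indicator_of_mem hs0, hxy hs0]

theorem volterraMap_indicator_apply_of_nonpos (x : ℝ →ᵇ E) {t : ℝ} (ht : t ≤ 0) :
    volterraMap τ z' hA ha x t = volterraMap τ z' hA ha x 0 := by
  rw [volterraMap_apply, volterraMap_apply, hz', hz', max_eq_right ht, max_self,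
    integralFrom_eq_of_nonpos τ (integrable_apply_add hA ha x) (fun s hs => ?_) ht]
  simp [indicator_of_notMem (notMem_Ioi.2 (mem_Iic.1 hs))]

theorem isVolterraSolution_of_isFixedPt {x : ℝ →ᵇ E}
    (hx : Function.IsFixedPt (volterraMap τ z' hA ha) x) {zl : E}
    (hzl : Tendsto z atTop (𝓝 zl)) : IsVolterraSolution τ A a z x := by
  have hz'l : Tendsto z' atTop (𝓝 zl) := hzl.congr' <|
    (eventually_ge_atTop 0).mono fun t ht => by rw [hz', max_eq_left ht]
  have hlim : Tendsto (volterraMap τ z' hA ha x) atTop _ :=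
    hz'l.add (tendsto_integralFrom τ (integrable_apply_add hA ha x))
  rw [hx] at hlim
  refine ⟨x.continuous.continuousOn, ⟨_, hlim⟩, fun t ht => ?_⟩
  conv_lhs => rw [← hx]
  exact volterraMap_indicator_apply_of_nonneg τ hz' hA ha (fun _ _ => rfl) ht

theorem isFixedPt_of_isVolterraSolution {y : ℝ → E} (hy : IsVolterraSolution τ A a z y)
    {y' : ℝ →ᵇ E} (hy' : ∀ t, y' t = y (max t 0)) :
    Function.IsFixedPt (volterraMap τ z' hA ha) y' := by
  have hy'y : EqOn y' y (Ici 0) := fun t ht => by rw [hy', max_eq_left ht]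
  have hpos {t : ℝ} (ht : 0 ≤ t) : volterraMap τ z' hA ha y' t = y' t := by
    rw [volterraMap_indicator_apply_of_nonneg τ hz' hA ha (hy'y.mono Ioi_subset_Ici_self) ht,
      ← hy.2.2 t ht, hy'y ht]
  ext t
  rcases le_total 0 t with ht | ht
  · exact hpos ht
  · rw [volterraMap_indicator_apply_of_nonpos τ hz' hA ha y' ht, hpos le_rfl, hy', hy',
      max_eq_right ht, max_self]

omit hz' in
theorem exists_isVolterraSolution_unique [CompleteSpace E] (hA : IntegrableOn A (Ioi 0))
    (ha : IntegrableOn a (Ioi 0)) (hzc : ContinuousOn z (Ici 0)) {zl : E}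
    (hzl : Tendsto z atTop (𝓝 zl)) :
    ∃ x, IsVolterraSolution τ A a z x ∧
      ∀ y, IsVolterraSolution τ A a z y → ∀ t ≥ (0 : ℝ), y t = x t := by
  have hA' := hA.integrable_indicator (ε' := E →L[ℝ] E) measurableSet_Ioi
  have ha' := ha.integrable_indicator measurableSet_Ioi
  obtain ⟨z', hz'⟩ := exists_boundedContinuousFunction_comp_max hzc hzl
  obtain ⟨x, hx, hx_unique⟩ := existsUnique_isFixedPt hA'.norm (fun _ => norm_nonneg _) τ
    (dist_volterraMap_apply_le τ (z := z') hA' ha')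
  refine ⟨x, isVolterraSolution_of_isFixedPt τ hz' hA' ha' hx hzl, fun y hy t ht => ?_⟩
  obtain ⟨y', hy'⟩ := exists_boundedContinuousFunction_comp_max hy.1 hy.2.1.choose_spec
  rw [← hx_unique y' (isFixedPt_of_isVolterraSolution τ hz' hA' ha' hy hy'), hy', max_eq_left ht]

end halfLine

end Volterra

/-- For integrable `A`, `a` on `[0,∞)`, every `z ∈ C_lim([0,∞),ℝⁿ)` and every `τ ∈ [0,∞]`,
there is a unique `x ∈ C_lim([0,∞),ℝⁿ)` with `x(t) = z(t) + ∫_τ^t (A(s)x(s)+a(s)) ds`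
for all `t ∈ [0,∞)`. -/
theorem volterra_existence_uniqueness (n : ℕ)
    (A : ℝ → (EuclideanSpace ℝ (Fin n) →L[ℝ] EuclideanSpace ℝ (Fin n)))
    (a : ℝ → EuclideanSpace ℝ (Fin n))
    (hA : IntegrableOn A (Ici (0:ℝ))) (ha : IntegrableOn a (Ici (0:ℝ)))
    (z : ℝ → EuclideanSpace ℝ (Fin n)) (zl : EuclideanSpace ℝ (Fin n))
    (hzc : ContinuousOn z (Ici (0:ℝ))) (hzl : Tendsto z atTop (𝓝 zl))
    (τ : ℝ≥0∞) :
    ∃ x : ℝ → EuclideanSpace ℝ (Fin n),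
      (ContinuousOn x (Ici (0:ℝ)) ∧ (∃ L, Tendsto x atTop (𝓝 L)) ∧
        ∀ t ≥ (0:ℝ), x t = z t + volterraInt n A a τ x t) ∧
      ∀ y : ℝ → EuclideanSpace ℝ (Fin n),
        (ContinuousOn y (Ici (0:ℝ)) ∧ (∃ L, Tendsto y atTop (𝓝 L)) ∧
          ∀ t ≥ (0:ℝ), y t = z t + volterraInt n A a τ y t) →
        ∀ t ≥ (0:ℝ), y t = x t :=
  Volterra.exists_isVolterraSolution_unique τ (hA.mono_set Ioi_subset_Ici_self)
    (ha.mono_set Ioi_subset_Ici_self) hzc hzl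
end

section
/- Let A : [0,∞) → ℝ^{n×n} be integrable on [0,∞) (∫_0^∞ ‖A(t)‖ dt < ∞). Then the only absolutely continuous solution z : [0,∞) → ℝⁿ of the linear ODE ż(t) = −A(t)ᵀ z(t) satisfying lim_{t→∞} z(t) = 0 is z ≡ 0. -/
open MeasureTheory Filter Topology Set
open scoped Interval

/-!
On an interval `[c, d] ⊆ [0, ∞)` with `θ = ∫_c^d ‖B‖ < 1`, the integral equation bounds
`sup_{[c, d]} ‖z‖` by `θ · sup_{[c, d]} ‖z‖ + ‖z p‖` for any `p ∈ [c, d]`, so `z` is controlled on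
`[c, d]` by its value at a single point. Going forward from `0`, this shows that `B z` is integrable
on every bounded interval, so the equation is not satisfied through junk values of the integral.
Taking `p → ∞` on a tail `[T, ∞)` with `∫_T^∞ ‖B‖ < 1` gives `z = 0` there, and since the
vanishing of `z` at one point propagates to all nearby points, connectedness of `[0, ∞)` gives
`z ≡ 0`.
-/

theorem le_div_one_sub_of_forall_le_add_mul {α : Type*} {S : Set α} {φ : α → ℝ} {C θ : ℝ}
    (hθ : θ < 1) (hφ : BddAbove (φ '' S))
    (h : ∀ m, (∀ s ∈ S, φ s ≤ m) → ∀ t ∈ S, φ t ≤ C + θ * m) :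
    ∀ t ∈ S, φ t ≤ C / (1 - θ) := by
  intro t ht
  have hle : ∀ s ∈ S, φ s ≤ sSup (φ '' S) := fun s hs =>
    le_csSup hφ (mem_image_of_mem φ hs)
  have hsup : sSup (φ '' S) ≤ C + θ * sSup (φ '' S) :=
    csSup_le (Nonempty.image φ ⟨t, ht⟩) (forall_mem_image.2 (h _ hle))
  rw [le_div_iff₀ (sub_pos.2 hθ)]
  nlinarith [hle t ht]

theorem integral_norm_apply_le {α E F : Type*} [MeasurableSpace α] {μ : Measure α}
    [NormedAddCommGroup E] [NormedSpace ℝ E] [NormedAddCommGroup F] [NormedSpace ℝ F]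
    {B : α → E →L[ℝ] F} {z : α → E} {m : ℝ} (hB : Integrable B μ)
    (hz : ∀ᵐ x ∂μ, ‖z x‖ ≤ m) :
    ∫ x, ‖B x (z x)‖ ∂μ ≤ (∫ x, ‖B x‖ ∂μ) * m := by
  rw [← integral_mul_const]
  exact integral_mono_of_nonneg (ae_of_all _ fun _ => norm_nonneg _) (hB.norm.mul_const m)
    (hz.mono fun x hx => (B x).le_opNorm_of_le hx)

theorem tendsto_setIntegral_uIoc_nhds_zero {E : Type*} [NormedAddCommGroup E]
    [NormedSpace ℝ E] {f : ℝ → E} {s : Set ℝ} [s.OrdConnected] (hf : IntegrableOn f s)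
    {x : ℝ} (hx : x ∈ s) : Tendsto (fun y => ∫ t in Ι x y, f t) (𝓝[s] x) (𝓝 0) := by
  have hvol : Tendsto (fun y => volume.restrict s (Ι x y)) (𝓝[s] x) (𝓝 0) := by
    refine tendsto_of_tendsto_of_tendsto_of_le_of_le tendsto_const_nhds ?_ (fun _ => zero_le)
      (fun y => Measure.restrict_apply_le _ _)
    simp only [Real.volume_uIoc]
    have := ENNReal.tendsto_ofReal
      (((continuous_id.sub (continuous_const (y := x))).abs).tendsto x)
    simpa using this.mono_left nhdsWithin_le_nhds
  refine (hf.tendsto_setIntegral_nhds_zero hvol).congr' ?_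
  filter_upwards [self_mem_nhdsWithin] with y hy
  rw [Measure.restrict_restrict measurableSet_uIoc,
    inter_eq_left.2 (uIoc_subset_uIcc.trans (Set.OrdConnected.uIcc_subset ‹_› hx hy))]

theorem tendsto_setIntegral_Ioi_atTop_zero {E : Type*} [NormedAddCommGroup E] [NormedSpace ℝ E]
    {f : ℝ → E} {a : ℝ} (hf : IntegrableOn f (Ioi a)) :
    Tendsto (fun T => ∫ x in Ioi T, f x) atTop (𝓝 0) := by
  have hempty : ⋂ T : ℝ, Ioi T = ∅ := iInter_eq_empty_iff.2 fun x => ⟨x, lt_irrefl x⟩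
  simpa only [hempty, setIntegral_empty] using tendsto_setIntegral_of_antitone
    (fun _ => measurableSet_Ioi) (fun _ _ h => Ioi_subset_Ioi h) ⟨a, hf⟩

section LinearIntegralEquation

variable {E : Type*} [NormedAddCommGroup E] [NormedSpace ℝ E]

/-- Integral (Carathéodory) form of `ż = -B(t) z` on `[0, ∞)`. -/
def SolvesLinearIntegralEq (B : ℝ → E →L[ℝ] E) (z : ℝ → E) : Prop :=
  ∀ t ≥ (0 : ℝ), z t = z 0 - ∫ s in (0 : ℝ)..t, B s (z s)

namespace SolvesLinearIntegralEq

variable {B : ℝ → E →L[ℝ] E} {z : ℝ → E}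

theorem continuousOn_Icc (hz : SolvesLinearIntegralEq B z) {d : ℝ} (hd : 0 ≤ d)
    (hg : IntegrableOn (fun s => B s (z s)) (Ioc 0 d)) : ContinuousOn z (Icc 0 d) := by
  rw [← integrableOn_Icc_iff_integrableOn_Ioc, ← uIcc_of_le hd] at hg
  rw [← uIcc_of_le hd]
  exact (continuousOn_const.sub (intervalIntegral.continuousOn_primitive_interval hg)).congr
    fun t ht => hz t (uIcc_of_le hd ▸ ht).1

theorem norm_le_div_one_sub (hz : SolvesLinearIntegralEq B z) {c d θ p : ℝ} (hc : 0 ≤ c)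
    (hg : IntegrableOn (fun s => B s (z s)) (Ioc 0 d)) (hB : IntegrableOn B (Ioc c d))
    (hθ : ∫ s in Ioc c d, ‖B s‖ ≤ θ) (hθ1 : θ < 1) (hp : p ∈ Icc c d) :
    ∀ t ∈ Icc c d, ‖z t‖ ≤ ‖z p‖ / (1 - θ) := by
  have hcont : ContinuousOn (fun t => ‖z t‖) (Icc c d) :=
    ((hz.continuousOn_Icc (hc.trans (hp.1.trans hp.2)) hg).mono (Icc_subset_Icc_left hc)).norm
  refine le_div_one_sub_of_forall_le_add_mul hθ1
    (isCompact_Icc.image_of_continuousOn hcont).bddAbove fun m hm t ht => ?_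
  have hint : ∀ u ∈ Icc c d, IntervalIntegrable (fun s => B s (z s)) volume 0 u := fun u hu =>
    (intervalIntegrable_iff_integrableOn_Ioc_of_le (hc.trans hu.1)).2
      (hg.mono_set (Ioc_subset_Ioc_right hu.2))
  have hsub : Ι p t ⊆ Ioc c d := Ioc_subset_Ioc (le_min hp.1 ht.1) (max_le hp.2 ht.2)
  have hzt : z t = z p - ∫ s in p..t, B s (z s) := by
    rw [hz t (hc.trans ht.1), hz p (hc.trans hp.1),
      ← intervalIntegral.integral_interval_sub_left (hint t ht) (hint p hp)]
    abel
  calc ‖z t‖ ≤ ‖z p‖ + ‖∫ s in p..t, B s (z s)‖ := hzt ▸ norm_sub_le _ _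
    _ ≤ ‖z p‖ + (∫ s in Ι p t, ‖B s‖) * m := by
      gcongr
      exact (intervalIntegral.norm_integral_le_integral_norm_uIoc).trans
        (integral_norm_apply_le (hB.mono_set hsub)
          (ae_restrict_of_forall_mem measurableSet_uIoc fun s hs =>
            hm s (Ioc_subset_Icc_self (hsub hs))))
    _ ≤ ‖z p‖ + θ * m := by
      have hm0 : 0 ≤ m := (norm_nonneg _).trans (hm t ht)
      gcongr
      exact (setIntegral_mono_set hB.norm (ae_of_all _ fun _ => norm_nonneg _)
        hsub.eventuallyLE).trans hθ

theorem integrableOn_Ioc_of_forall_lt (hz : SolvesLinearIntegralEq B z) {b : ℝ} (hb : 0 < b)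
    (hB : IntegrableOn B (Ici 0))
    (h : ∀ d ∈ Ico 0 b, IntegrableOn (fun s => B s (z s)) (Ioc 0 d)) :
    IntegrableOn (fun s => B s (z s)) (Ioc 0 b) := by
  obtain ⟨c, ⟨hc, hcb⟩, hθ⟩ : ∃ c ∈ Ico 0 b, ∫ s in Ioc c b, ‖B s‖ < 1 := by
    have hsmall := (tendsto_setIntegral_uIoc_nhds_zero hB.norm hb.le).eventually
      (gt_mem_nhds one_pos)
    have hleft : 𝓝[<] b ≤ 𝓝[Ici 0] b :=
      nhdsWithin_le_of_mem (mem_nhdsWithin_of_mem_nhds (Ici_mem_nhds hb))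
    obtain ⟨c, hc, hcb⟩ := ((hsmall.filter_mono hleft).and (Ioo_mem_nhdsLT hb)).exists
    exact ⟨c, ⟨hcb.1.le, hcb.2⟩, by rwa [uIoc_of_ge hcb.2.le] at hc⟩
  have hBcb : IntegrableOn B (Ioc c b) := hB.mono_set fun s hs => hc.trans hs.1.le
  set K := ‖z c‖ / (1 - ∫ s in Ioc c b, ‖B s‖)
  have hbound : ∀ d ∈ Ico c b, ∀ t ∈ Icc c d, ‖z t‖ ≤ K := fun d hd =>
    hz.norm_le_div_one_sub hc (h d ⟨hc.trans hd.1, hd.2⟩)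
      (hBcb.mono_set (Ioc_subset_Ioc_right hd.2.le))
      (setIntegral_mono_set hBcb.norm (ae_of_all _ fun _ => norm_nonneg _)
        (Ioc_subset_Ioc_right hd.2.le).eventuallyLE) hθ ⟨le_rfl, hd.1⟩
  obtain ⟨u, -, hu, hu_lim⟩ := exists_seq_strictMono_tendsto' hcb
  have hcb_int : IntegrableOn (fun s => B s (z s)) (Ioc c b) := by
    refine integrableOn_Ioc_of_intervalIntegral_norm_bounded_right
      (I := (∫ s in Ioc c b, ‖B s‖) * K)
      (fun n => (h (u n) ⟨hc.trans (hu n).1.le, (hu n).2⟩).mono_set (Ioc_subset_Ioc_left hc))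
      hu_lim (Eventually.of_forall fun n => ?_)
    have hsub : Ioc c (u n) ⊆ Ioc c b := Ioc_subset_Ioc_right (hu n).2.le
    calc ∫ s in Ioc c (u n), ‖B s (z s)‖
        ≤ (∫ s in Ioc c (u n), ‖B s‖) * K :=
          integral_norm_apply_le (hBcb.mono_set hsub)
            (ae_restrict_of_forall_mem measurableSet_Ioc fun t ht =>
              hbound (u n) ⟨(hu n).1.le, (hu n).2⟩ t (Ioc_subset_Icc_self ht))
      _ ≤ (∫ s in Ioc c b, ‖B s‖) * K := by
          have hK : 0 ≤ K := div_nonneg (norm_nonneg _) (sub_pos.2 hθ).le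
          exact mul_le_mul_of_nonneg_right (setIntegral_mono_set hBcb.norm
            (ae_of_all _ fun _ => norm_nonneg _) hsub.eventuallyLE) hK
  rw [← Ioc_union_Ioc_eq_Ioc hc hcb.le]
  exact (h c ⟨hc, hcb⟩).union hcb_int

theorem integrableOn_Ioc (hz : SolvesLinearIntegralEq B z) (hB : IntegrableOn B (Ici 0))
    (t : ℝ) : IntegrableOn (fun s => B s (z s)) (Ioc 0 t) := by
  by_contra hnot
  set I := {t : ℝ | 0 ≤ t ∧ IntegrableOn (fun s => B s (z s)) (Ioc 0 t)}
  have hI : BddAbove I := ⟨t, fun u hu => le_of_not_gt fun htu =>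
    hnot (hu.2.mono_set (Ioc_subset_Ioc_right htu.le))⟩
  have h0 : (0 : ℝ) ∈ I := ⟨le_rfl, by simp⟩
  set b := sSup I
  have hb : 0 ≤ b := le_csSup hI h0
  have hbI : IntegrableOn (fun s => B s (z s)) (Ioc 0 b) := by
    rcases hb.eq_or_lt with hb0 | hb0
    · simp [← hb0]
    refine hz.integrableOn_Ioc_of_forall_lt hb0 hB fun d hd => ?_
    obtain ⟨e, he, hde⟩ := exists_lt_of_lt_csSup ⟨0, h0⟩ hd.2
    exact he.2.mono_set (Ioc_subset_Ioc_right hde.le)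
  -- beyond `b` the interval integral in the equation is the junk value `0`, so `z` is constant
  have hconst : ∀ u ∈ Ioc b (b + 1), z u = z 0 := fun u hu => by
    have hu0 : 0 ≤ u := hb.trans hu.1.le
    have hnu : ¬ IntervalIntegrable (fun s => B s (z s)) volume 0 u := fun hint =>
      hu.1.not_ge <| le_csSup hI
        ⟨hu0, (intervalIntegrable_iff_integrableOn_Ioc_of_le hu0).1 hint⟩
    rw [hz u hu0, intervalIntegral.integral_undef hnu, sub_zero]
  have hnext : IntegrableOn (fun s => B s (z s)) (Ioc b (b + 1)) :=
    IntegrableOn.congr_fun (Integrable.apply_continuousLinearMap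
        (hB.mono_set fun s (hs : s ∈ Ioc b (b + 1)) => hb.trans hs.1.le) (z 0))
      (fun u hu => by rw [hconst u hu]) measurableSet_Ioc
  have hb1 : b + 1 ∈ I := ⟨by linarith, by
    rw [← Ioc_union_Ioc_eq_Ioc hb (by linarith)]; exact hbI.union hnext⟩
  linarith [le_csSup hI hb1]

theorem eq_zero_of_tendsto_zero (hz : SolvesLinearIntegralEq B z) (hB : IntegrableOn B (Ici 0))
    (hlim : Tendsto z atTop (𝓝 0)) {t : ℝ} (ht : 0 ≤ t) : z t = 0 := by
  have hspread : ∀ x y, 0 ≤ x → 0 ≤ y → ∫ s in Ι x y, ‖B s‖ < 1 → z x = 0 → z y = 0 := by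
    intro x y hx hy hθ hzx
    have := hz.norm_le_div_one_sub (le_min hx hy) (hz.integrableOn_Ioc hB _)
      (hB.mono_set fun s hs => (le_min hx hy).trans hs.1.le) le_rfl hθ
      ⟨min_le_left x y, le_max_left x y⟩ y ⟨min_le_right x y, le_max_right x y⟩
    rwa [hzx, norm_zero, zero_div, norm_le_zero_iff] at this
  obtain ⟨T, hT, hTθ⟩ : ∃ T, 0 ≤ T ∧ ∫ s in Ioi T, ‖B s‖ < 1 := by
    obtain ⟨T, hT⟩ := eventually_atTop.1 <|
      (tendsto_setIntegral_Ioi_atTop_zero (hB.mono_set Ioi_subset_Ici_self).norm).eventually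
        (gt_mem_nhds one_pos)
    exact ⟨max T 0, le_max_right T 0, hT _ (le_max_left T 0)⟩
  have hBT : IntegrableOn B (Ioi T) := hB.mono_set fun s hs => hT.trans (le_of_lt hs)
  have hzT : z T = 0 := by
    have hbound : ∀ᶠ d in atTop, ‖z T‖ ≤ ‖z d‖ / (1 - ∫ s in Ioi T, ‖B s‖) := by
      filter_upwards [eventually_ge_atTop T] with d hd
      exact hz.norm_le_div_one_sub hT (hz.integrableOn_Ioc hB d)
        (hBT.mono_set Ioc_subset_Ioi_self)
        (setIntegral_mono_set hBT.norm (ae_of_all _ fun _ => norm_nonneg _)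
          Ioc_subset_Ioi_self.eventuallyLE) hTθ ⟨hd, le_rfl⟩ T ⟨le_rfl, hd⟩
    have := ge_of_tendsto (hlim.norm.div_const _) hbound
    rwa [norm_zero, zero_div, norm_le_zero_iff] at this
  exact isPreconnected_Ici.induction₂' (fun x y => z x = 0 → z y = 0)
    (fun x hx => by
      filter_upwards [(tendsto_setIntegral_uIoc_nhds_zero hB.norm hx).eventually
        (gt_mem_nhds one_pos), self_mem_nhdsWithin] with y hy hy0
      exact ⟨hspread x y hx hy0 hy, hspread y x hy0 hx (uIoc_comm x y ▸ hy)⟩)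
    (fun _ _ _ _ _ _ hxy hyz => hyz ∘ hxy) hT ht hzT

end SolvesLinearIntegralEq

end LinearIntegralEquation

/-- For `A` integrable on `[0,∞)`, the only (Carathéodory, i.e. absolutely continuous,
here expressed in integral form) solution of `ż(t) = −A(t)ᵀ z(t)` with `z(t) → 0`
as `t → ∞` is `z ≡ 0` on `[0,∞)`. -/
theorem adjoint_ode_vanishing_limit_zero (n : ℕ)
    (A : ℝ → (EuclideanSpace ℝ (Fin n) →L[ℝ] EuclideanSpace ℝ (Fin n)))
    (hA : IntegrableOn A (Ici (0:ℝ)))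
    (z : ℝ → EuclideanSpace ℝ (Fin n))
    (hz : ∀ t ≥ (0:ℝ), z t = z 0 - ∫ s in (0:ℝ)..t, ContinuousLinearMap.adjoint (A s) (z s))
    (hlim : Tendsto z atTop (𝓝 (0 : EuclideanSpace ℝ (Fin n)))) :
    ∀ t ≥ (0:ℝ), z t = 0 := by
  have hAdj : IntegrableOn (fun s => ContinuousLinearMap.adjoint (A s)) (Ici 0) :=
    hA.congr' (ContinuousLinearMap.adjoint.continuous.comp_aestronglyMeasurable
      hA.aestronglyMeasurable)
      (ae_of_all _ fun s => (ContinuousLinearMap.adjoint.norm_map (A s)).symm)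
  exact fun t ht => SolvesLinearIntegralEq.eq_zero_of_tendsto_zero hz hAdj hlim ht
end

section
/- Let A : [0,∞) → ℝ^{n×n} be integrable on [0,∞) and a : [0,∞) → ℝⁿ integrable. Then for every z ∈ ℝⁿ and every τ ∈ [0,∞] (including τ = ∞) there exists a unique solution x of ẋ(t) = A(t)x(t) + a(t) on [0,∞) which belongs to C_lim([0,∞), ℝⁿ) and satisfies x(τ) = z (for τ = ∞, this means lim_{t→∞} x(t) = z). -/
/-!
Both boundary conditions turn the equation into a fixed-point problem on bounded continuous
functions: `x t = z + ∫ s in τ..t, (A s (x s) + a s)` for finite `τ` and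
`x t = z - ∫ s in Ioi t, (A s (x s) + a s)` for `τ = ∞`. Writing `J t` for `uIoc τ t`, resp.
`Ioi t`, and `g t = ∫ s in J t, ‖A s‖`, the `k`-th iterates of either operator at two points
differ at time `t` by at most `g t ^ k / k!` times the distance of the points, because the
absolutely continuous weight `g` satisfies
`∫ s in J t, ‖A s‖ * g s ^ k = g t ^ (k + 1) / (k + 1)`.
Hence some iterate is a contraction, and the same estimate proves a Gronwall lemma. A function
that satisfies the integral equation only formally agrees on `[0, ∞)` with a bounded continuous
solution: by Gronwall it does so on every interval where its right-hand side is integrable, and a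
supremum argument shows that these intervals exhaust `[0, ∞)`.
-/

open MeasureTheory Filter Topology Set
open scoped ENNReal Nat BoundedContinuousFunction

theorem AbsolutelyContinuousOnInterval.pow_s9 {f : ℝ → ℝ} {a b : ℝ}
    (hf : AbsolutelyContinuousOnInterval f a b) (k : ℕ) :
    AbsolutelyContinuousOnInterval (fun x => f x ^ k) a b := by
  induction k with
  | zero =>
    simpa using (LipschitzWith.const (1 : ℝ)).lipschitzOnWith.absolutelyContinuousOnInterval
  | succ k ih => simpa only [pow_succ] using ih.fun_mul hf

theorem integral_mul_const_add_primitive_pow {h : ℝ → ℝ} {a b : ℝ}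
    (hh : IntervalIntegrable h volume a b) (c : ℝ) (k : ℕ) :
    ∫ s in a..b, h s * (c + ∫ u in a..s, h u) ^ k =
      ((c + ∫ u in a..b, h u) ^ (k + 1) - c ^ (k + 1)) / (k + 1) := by
  set G : ℝ → ℝ := fun s => c + ∫ u in a..s, h u
  have hG : AbsolutelyContinuousOnInterval G a b :=
    (LipschitzWith.const c).lipschitzOnWith.absolutelyContinuousOnInterval.fun_add
      (hh.absolutelyContinuousOnInterval_intervalIntegral left_mem_uIcc)
  have hderiv : ∀ᵐ x, x ∈ uIoc a b →
      deriv (fun s => G s ^ (k + 1)) x = (k + 1) * (h x * G x ^ k) := by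
    filter_upwards [hh.ae_hasDerivAt_integral] with x hx hxI
    have hGx : HasDerivAt G (h x) x := (hx (uIoc_subset_uIcc hxI) a left_mem_uIcc).const_add c
    rw [(hGx.fun_pow (k + 1)).deriv]
    push_cast
    ring
  have hFTC := (hG.pow_s9 (k + 1)).integral_deriv_eq_sub
  rw [intervalIntegral.integral_congr_ae hderiv, intervalIntegral.integral_const_mul] at hFTC
  simp only [G, intervalIntegral.integral_same, add_zero] at hFTC
  field_simp
  linarith

theorem MeasureTheory.Integrable.continuous_integral_Ioi {E : Type*} [NormedAddCommGroup E]
    [NormedSpace ℝ E] {f : ℝ → E} (hf : Integrable f) :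
    Continuous fun t => ∫ s in Ioi t, f s := by
  have hg : (fun t => ∫ s in Ioi t, f s) = fun t => (∫ s in Ioi 0, f s) - ∫ s in 0..t, f s :=
    funext fun t => by
      rw [← intervalIntegral.integral_Ioi_sub_Ioi' hf.integrableOn hf.integrableOn,
        sub_sub_cancel]
  rw [hg]
  exact continuous_const.sub
    (intervalIntegral.continuous_primitive (fun _ _ => hf.intervalIntegrable) 0)

theorem MeasureTheory.Integrable.mul_setIntegral_pow {h : ℝ → ℝ} (hh : Integrable h)
    (h0 : 0 ≤ h) {J : ℝ → Set ℝ} (hJ : Measurable fun t => ∫ s in J t, h s) (k : ℕ) :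
    Integrable fun s => h s * (∫ u in J s, h u) ^ k := by
  refine hh.mul_bdd (c := (∫ u, h u) ^ k) (hJ.pow_const k).aestronglyMeasurable
    (ae_of_all _ fun s => ?_)
  have hg0 : 0 ≤ ∫ u in J s, h u := integral_nonneg h0
  rw [norm_pow, Real.norm_of_nonneg hg0]
  exact pow_le_pow_left₀ hg0 (setIntegral_le_integral hh (ae_of_all _ h0)) k

theorem mul_setIntegral_pow_div_factorial_le {h : ℝ → ℝ} (hh : Integrable h) (h0 : 0 ≤ h)
    {D : ℝ} (hD : 0 ≤ D) (S : Set ℝ) (k : ℕ) :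
    D * (∫ s in S, h s) ^ k / k ! ≤ D * (∫ s, h s) ^ k / k ! := by
  have hg0 : 0 ≤ ∫ s in S, h s := integral_nonneg h0
  have hgM : ∫ s in S, h s ≤ ∫ s, h s := setIntegral_le_integral hh (ae_of_all _ h0)
  gcongr

/-- `J t` is the domain of integration of a Volterra operator at time `t` (`uIoc c t` for a
condition at `c`, `Ioi t` for a condition at infinity). The second field is the inductive step of
the bound `(∫ s in J t, h s) ^ k / k!` for the iterated integral of `h` over the `k`-simplex
`{s₁ ∈ J t, s₂ ∈ J s₁, …}`. -/
structure SimplexBound (h : ℝ → ℝ) (J : ℝ → Set ℝ) : Prop where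
  measurable_weight : Measurable fun t => ∫ s in J t, h s
  integral_mul_pow_le (t : ℝ) (k : ℕ) :
    ∫ s in J t, h s * (∫ u in J s, h u) ^ k ≤ (∫ u in J t, h u) ^ (k + 1) / (k + 1)

theorem simplexBound_uIoc {h : ℝ → ℝ} (hh : Integrable h) (h0 : 0 ≤ h) (c : ℝ) :
    SimplexBound h (uIoc c) where
  measurable_weight := by
    have hg : (fun t => ∫ s in uIoc c t, h s) = fun t => |∫ s in c..t, h s| :=
      funext fun t => by
        rw [intervalIntegral.abs_integral_eq_abs_integral_uIoc,
          abs_of_nonneg (integral_nonneg h0)]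
    rw [hg]
    exact (intervalIntegral.continuous_primitive (fun _ _ => hh.intervalIntegrable)
      c).abs.measurable
  integral_mul_pow_le t k := by
    refine le_of_eq ?_
    rcases le_total c t with hct | htc
    · calc ∫ s in uIoc c t, h s * (∫ u in uIoc c s, h u) ^ k
          = ∫ s in c..t, h s * (0 + ∫ u in c..s, h u) ^ k := by
            rw [uIoc_of_le hct, intervalIntegral.integral_of_le hct]
            refine setIntegral_congr_fun measurableSet_Ioc fun s hs => ?_
            simp only [uIoc_of_le hs.1.le, intervalIntegral.integral_of_le hs.1.le, zero_add]
        _ = _ := by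
            rw [integral_mul_const_add_primitive_pow hh.intervalIntegrable, uIoc_of_le hct,
              intervalIntegral.integral_of_le hct]
            simp
    · calc ∫ s in uIoc c t, h s * (∫ u in uIoc c s, h u) ^ k
          = ∫ s in c..t, -h s * (0 + ∫ u in c..s, -h u) ^ k := by
            rw [uIoc_of_ge htc, intervalIntegral.integral_of_ge htc, ← integral_neg]
            refine setIntegral_congr_fun measurableSet_Ioc fun s hs => ?_
            simp only [uIoc_of_ge hs.2, intervalIntegral.integral_of_ge hs.2, integral_neg,
              neg_neg, zero_add, neg_mul]
        _ = _ := by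
            rw [integral_mul_const_add_primitive_pow (h := fun s => -h s)
              hh.neg.intervalIntegrable, uIoc_of_ge htc, intervalIntegral.integral_neg,
              intervalIntegral.integral_of_ge htc]
            simp

theorem simplexBound_Ioi {h : ℝ → ℝ} (hh : Integrable h) (h0 : 0 ≤ h) :
    SimplexBound h Ioi where
  measurable_weight := hh.continuous_integral_Ioi.measurable
  integral_mul_pow_le t k := by
    set g : ℝ → ℝ := fun s => ∫ u in Ioi s, h u
    have hgs (s : ℝ) : g s = g t + ∫ u in t..s, -h u := by
      rw [intervalIntegral.integral_neg, ← intervalIntegral.integral_Ioi_sub_Ioi'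
        hh.integrableOn hh.integrableOn]
      ring
    have hfin (T : ℝ) :
        ∫ s in t..T, h s * g s ^ k = (g t ^ (k + 1) - g T ^ (k + 1)) / (k + 1) := by
      have := integral_mul_const_add_primitive_pow (h := fun s => -h s)
        (hh.neg.intervalIntegrable (a := t) (b := T)) (g t) k
      simp_rw [← hgs, neg_mul, intervalIntegral.integral_neg, neg_eq_iff_eq_neg] at this
      rw [this]
      ring
    refine le_of_tendsto (intervalIntegral_tendsto_integral_Ioi t
      (hh.mul_setIntegral_pow h0 hh.continuous_integral_Ioi.measurable k).integrableOn tendsto_id)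
      (Eventually.of_forall fun T => ?_)
    rw [id, hfin]
    gcongr
    exact sub_le_self _ (pow_nonneg (integral_nonneg h0) _)

theorem ContractingWith.existsUnique_isFixedPt_of_iterate {α : Type*} [MetricSpace α]
    [Nonempty α] [CompleteSpace α] {K : NNReal} {f : α → α} {m : ℕ}
    (hf : ContractingWith K f^[m]) : ∃! x, Function.IsFixedPt f x :=
  ⟨hf.fixedPoint, hf.fixedPoint_unique
      (hf.fixedPoint_isFixedPt.map (Function.Commute.self_iterate f m)),
    fun _ hy => hf.fixedPoint_unique (hy.iterate m)⟩

namespace SimplexBound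

variable {h : ℝ → ℝ} {J : ℝ → Set ℝ}

theorem le_mul_pow_div_factorial (hJ : SimplexBound h J) (hh : Integrable h) (h0 : 0 ≤ h)
    {u : ℕ → ℝ → ℝ} {D : ℝ} (hu0 : ∀ k t, 0 ≤ u k t) (huD : ∀ t, u 0 t ≤ D)
    (hstep : ∀ k t, u (k + 1) t ≤ ∫ s in J t, h s * u k s) (k : ℕ) (t : ℝ) :
    u k t ≤ D * (∫ s in J t, h s) ^ k / k ! := by
  induction k generalizing t with
  | zero => simpa using huD t
  | succ k ih =>
    have hD : 0 ≤ D / k ! := div_nonneg ((hu0 0 t).trans (huD t)) (by positivity)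
    calc u (k + 1) t ≤ ∫ s in J t, h s * u k s := hstep k t
      _ ≤ ∫ s in J t, D / k ! * (h s * (∫ u in J s, h u) ^ k) := by
          refine integral_mono_of_nonneg (ae_of_all _ fun s => mul_nonneg (h0 s) (hu0 k s))
            ((hh.mul_setIntegral_pow h0 hJ.measurable_weight k).const_mul _).integrableOn
            (ae_of_all _ fun s => ?_)
          calc h s * u k s ≤ h s * (D * (∫ u in J s, h u) ^ k / k !) :=
                mul_le_mul_of_nonneg_left (ih s) (h0 s)
            _ = D / k ! * (h s * (∫ u in J s, h u) ^ k) := by ring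
      _ ≤ D / k ! * ((∫ s in J t, h s) ^ (k + 1) / (k + 1)) := by
          rw [integral_const_mul]
          exact mul_le_mul_of_nonneg_left (hJ.integral_mul_pow_le t k) hD
      _ = D * (∫ s in J t, h s) ^ (k + 1) / (k + 1)! := by
          rw [Nat.factorial_succ]
          push_cast
          field_simp

theorem eq_zero_of_le_integral (hJ : SimplexBound h J) (hh : Integrable h) (h0 : 0 ≤ h)
    {u : ℝ → ℝ} {D : ℝ} (hu0 : ∀ t, 0 ≤ u t) (huD : ∀ t, u t ≤ D)
    (hu : ∀ t, u t ≤ ∫ s in J t, h s * u s) (t : ℝ) : u t = 0 := by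
  have hD : 0 ≤ D := (hu0 t).trans (huD t)
  have hbound (k : ℕ) : u t ≤ D * (∫ s, h s) ^ k / k ! :=
    (hJ.le_mul_pow_div_factorial hh h0 (u := fun _ => u) (fun _ => hu0) huD (fun _ => hu) k
      t).trans (mul_setIntegral_pow_div_factorial_le hh h0 hD _ k)
  have hlim : Tendsto (fun k : ℕ => D * (∫ s, h s) ^ k / k !) atTop (𝓝 0) := by
    simpa only [mul_div_assoc, mul_zero] using
      (FloorSemiring.tendsto_pow_div_factorial_atTop (∫ s, h s)).const_mul D
  exact le_antisymm (ge_of_tendsto' hlim hbound) (hu0 t)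

theorem existsUnique_isFixedPt {V : Type*} [NormedAddCommGroup V] [CompleteSpace V]
    (hJ : SimplexBound h J) (hh : Integrable h) (h0 : 0 ≤ h)
    {Φ : (ℝ →ᵇ V) → (ℝ →ᵇ V)}
    (hΦ : ∀ x y t, ‖Φ x t - Φ y t‖ ≤ ∫ s in J t, h s * ‖x s - y s‖) :
    ∃! x, Function.IsFixedPt Φ x := by
  have hM : 0 ≤ ∫ s, h s := integral_nonneg h0
  have hiter (k : ℕ) (x y : ℝ →ᵇ V) :
      dist (Φ^[k] x) (Φ^[k] y) ≤ (∫ s, h s) ^ k / k ! * dist x y := by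
    refine (BoundedContinuousFunction.dist_le (by positivity)).2 fun t => ?_
    calc dist (Φ^[k] x t) (Φ^[k] y t)
        ≤ dist x y * (∫ s in J t, h s) ^ k / k ! := by
          refine hJ.le_mul_pow_div_factorial hh h0
            (u := fun k t => dist (Φ^[k] x t) (Φ^[k] y t)) (fun _ _ => dist_nonneg)
            (fun t => BoundedContinuousFunction.dist_coe_le_dist t) (fun k t => ?_) k t
          simpa only [Function.iterate_succ_apply', dist_eq_norm] using hΦ _ _ t
      _ ≤ dist x y * (∫ s, h s) ^ k / k ! :=
          mul_setIntegral_pow_div_factorial_le hh h0 dist_nonneg _ k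
      _ = (∫ s, h s) ^ k / k ! * dist x y := by ring
  obtain ⟨m, hm⟩ := ((FloorSemiring.tendsto_pow_div_factorial_atTop (∫ s, h s)).eventually
    (gt_mem_nhds one_pos)).exists
  exact ContractingWith.existsUnique_isFixedPt_of_iterate (K := ⟨_, by positivity⟩)
    ⟨hm, LipschitzWith.of_dist_le_mul (hiter m)⟩

end SimplexBound

theorem eqOn_zero_of_le_integral_Ioc {h v : ℝ → ℝ} (hh : Integrable h) (h0 : 0 ≤ h)
    {T : ℝ} (hv : ContinuousOn v (Icc 0 T)) (hv0 : ∀ r ∈ Icc 0 T, 0 ≤ v r)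
    (hle : ∀ r ∈ Icc 0 T, v r ≤ ∫ s in Ioc 0 r, h s * v s) : EqOn v 0 (Icc 0 T) := by
  obtain ⟨D, hD⟩ := isCompact_Icc.exists_bound_of_continuousOn hv
  set u := (Icc 0 T).indicator v
  have hu0 (r : ℝ) : 0 ≤ u r := indicator_nonneg hv0 r
  have huD (r : ℝ) : u r ≤ max D 0 := by
    by_cases hr : r ∈ Icc 0 T
    · simpa [u, hr] using le_max_of_le_left ((le_abs_self _).trans (hD r hr))
    · simp [u, hr]
  have hstep (r : ℝ) : u r ≤ ∫ s in uIoc 0 r, h s * u s := by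
    by_cases hr : r ∈ Icc 0 T
    · have hIoc : Ioc 0 r ⊆ Icc 0 T := Ioc_subset_Icc_self.trans (Icc_subset_Icc_right hr.2)
      calc u r = v r := indicator_of_mem hr v
        _ ≤ ∫ s in Ioc 0 r, h s * v s := hle r hr
        _ = ∫ s in uIoc 0 r, h s * u s := by
            rw [uIoc_of_le hr.1]
            exact setIntegral_congr_fun measurableSet_Ioc fun s hs => by
              simp only [u, indicator_of_mem (hIoc hs)]
    · rw [show u r = 0 from indicator_of_notMem hr _]
      exact integral_nonneg fun s => mul_nonneg (h0 s) (hu0 s)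
  intro r hr
  simpa [u, hr] using (simplexBound_uIoc hh h0 0).eq_zero_of_le_integral hh h0 hu0 huD hstep r

section LinearVolterra

variable {V : Type*} [NormedAddCommGroup V] [NormedSpace ℝ V]
  {B : ℝ → V →L[ℝ] V} {b : ℝ → V} {μ : Measure ℝ}

theorem integrable_norm_mul_norm (hB : Integrable B μ) (x : ℝ →ᵇ V) :
    Integrable (fun s => ‖B s‖ * ‖x s‖) μ :=
  hB.norm.mul_bdd x.continuous.norm.aestronglyMeasurable
    (ae_of_all _ fun s => by simpa using x.norm_coe_le_norm s)

theorem integrable_apply_add (hB : Integrable B μ) (hb : Integrable b μ)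
    (x : ℝ →ᵇ V) : Integrable (fun s => B s (x s) + b s) μ :=
  ((integrable_norm_mul_norm hB x).mono'
    (isBoundedBilinearMap_apply.continuous.comp_aestronglyMeasurable
      (hB.aestronglyMeasurable.prodMk x.continuous.aestronglyMeasurable))
    (ae_of_all _ fun s => (B s).le_opNorm _)).add hb

theorem norm_integral_apply_add_sub_le {x y : ℝ → V}
    (hxy : Integrable (fun s => ‖B s‖ * ‖x s - y s‖) μ) :
    ‖∫ s, (B s (x s) + b s - (B s (y s) + b s)) ∂μ‖ ≤
      ∫ s, ‖B s‖ * ‖x s - y s‖ ∂μ := by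
  refine norm_integral_le_of_norm_le hxy (ae_of_all _ fun s => ?_)
  rw [add_sub_add_right_eq_sub, ← map_sub]
  exact (B s).le_opNorm _

theorem norm_setIntegral_le_integral_norm {f : ℝ → V} (hf : Integrable f) (S : Set ℝ) :
    ‖∫ s in S, f s‖ ≤ ∫ s, ‖f s‖ :=
  (norm_integral_le_integral_norm _).trans
    (setIntegral_le_integral hf.norm (ae_of_all _ fun _ => norm_nonneg _))

theorem apply_eq_apply_add_integral {f : ℝ → V} (hf : Integrable f) {x : ℝ → V} {c : ℝ}
    {z : V} (hx : ∀ t, x t = z + ∫ s in c..t, f s) (c' t : ℝ) :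
    x t = x c' + ∫ s in c'..t, f s := by
  rw [hx t, hx c', add_assoc,
    intervalIntegral.integral_add_adjacent_intervals hf.intervalIntegrable hf.intervalIntegrable]

theorem apply_eq_sub_integral_Ioi {f : ℝ → V} (hf : Integrable f) {x : ℝ → V} {c : ℝ}
    {z : V} (hx : ∀ t, x t = z + ∫ s in c..t, f s) (t : ℝ) :
    x t = (z + ∫ s in Ioi c, f s) - ∫ s in Ioi t, f s := by
  rw [hx t, ← intervalIntegral.integral_Ioi_sub_Ioi' hf.integrableOn hf.integrableOn]
  abel

theorem tendsto_sub_integral_Ioi {f : ℝ → V} (z : V) :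
    Tendsto (fun t => z - ∫ s in Ioi t, f s) atTop (𝓝 z) := by
  simpa using (tendsto_integral_Ioi_zero (μ := volume) (f := f) tendsto_id).const_sub z

theorem tendsto_of_eq_add_integral {f : ℝ → V} (hf : Integrable f) {x : ℝ → V} {c : ℝ}
    {z : V} (hx : ∀ t, x t = z + ∫ s in c..t, f s) :
    Tendsto x atTop (𝓝 (z + ∫ s in Ioi c, f s)) :=
  (tendsto_sub_integral_Ioi _).congr fun t => (apply_eq_sub_integral_Ioi hf hx t).symm

/-- Local integrability of `s ↦ B s (y s) + b s` is not part of the definition: where it fails,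
the interval integral takes the junk value `0`. -/
def IsIntegralSolution (B : ℝ → V →L[ℝ] V) (b : ℝ → V) (y : ℝ → V) : Prop :=
  ∀ t ≥ (0 : ℝ), y t = y 0 + ∫ s in (0 : ℝ)..t, (B s (y s) + b s)

theorem IsIntegralSolution.eqOn_Icc {y : ℝ → V} (hy : IsIntegralSolution B b y)
    (hB : Integrable B) (hb : Integrable b) {x : ℝ →ᵇ V}
    (hx : ∀ t, x t = y 0 + ∫ s in (0 : ℝ)..t, (B s (x s) + b s)) {T : ℝ} (hT : 0 ≤ T)
    (hyT : IntervalIntegrable (fun s => B s (y s) + b s) volume 0 T) : EqOn y x (Icc 0 T) := by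
  have hcont : ContinuousOn (fun r => y r - x r) (Icc 0 T) := by
    refine ContinuousOn.sub ?_ x.continuous.continuousOn
    rw [← uIcc_of_le hT]
    exact (continuousOn_const.add (intervalIntegral.continuousOn_primitive_interval' hyT
      left_mem_uIcc)).congr fun r hr => hy r (by rw [uIcc_of_le hT] at hr; exact hr.1)
  have hstep : ∀ r ∈ Icc 0 T, ‖y r - x r‖ ≤ ∫ s in Ioc 0 r, ‖B s‖ * ‖y s - x s‖ := by
    intro r hr
    have hyr : IntervalIntegrable (fun s => B s (y s) + b s) volume 0 r :=
      hyT.mono_set (uIcc_subset_uIcc left_mem_uIcc (by rwa [uIcc_of_le hT]))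
    calc ‖y r - x r‖ = ‖∫ s in Ioc 0 r, (B s (y s) + b s - (B s (x s) + b s))‖ := by
          rw [hy r hr.1, hx r, add_sub_add_left_eq_sub,
            ← intervalIntegral.integral_sub hyr (integrable_apply_add hB hb x).intervalIntegrable,
            intervalIntegral.integral_of_le hr.1]
      _ ≤ ∫ s in Ioc 0 r, ‖B s‖ * ‖y s - x s‖ :=
          norm_integral_apply_add_sub_le ((hB.norm.integrableOn.mul_continuousOn hcont.norm
            isCompact_Icc).mono_set (Ioc_subset_Icc_self.trans (Icc_subset_Icc_right hr.2)))
  intro r hr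
  simpa [sub_eq_zero] using eqOn_zero_of_le_integral_Ioc hB.norm (fun _ => norm_nonneg _)
    hcont.norm (fun _ _ => norm_nonneg _) hstep hr

theorem IsIntegralSolution.eqOn_Ici {y : ℝ → V} (hy : IsIntegralSolution B b y)
    (hB : Integrable B) (hb : Integrable b) {x : ℝ →ᵇ V}
    (hx : ∀ t, x t = y 0 + ∫ s in (0 : ℝ)..t, (B s (x s) + b s)) : EqOn y x (Ici 0) := by
  set S := {T : ℝ | 0 ≤ T ∧ IntervalIntegrable (fun s => B s (y s) + b s) volume 0 T}
  suffices hS : ∀ T, 0 ≤ T → T ∈ S from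
    fun T hT => hy.eqOn_Icc hB hb hx hT (hS T hT).2 ⟨hT, le_rfl⟩
  by_contra! ⟨T₀, hT₀, hT₀S⟩
  have hbdd : BddAbove S := ⟨T₀, fun T hT => not_lt.1 fun hlt => hT₀S ⟨hT₀, hT.2.mono_set
    (uIcc_subset_uIcc left_mem_uIcc (by rw [uIcc_of_le hT.1]; exact ⟨hT₀, hlt.le⟩))⟩⟩
  have h0S : (0 : ℝ) ∈ S := ⟨le_rfl, .refl⟩
  set T := sSup S
  have hT0 : 0 ≤ T := le_csSup hbdd h0S
  have hbelow : EqOn (fun s => B s (y s) + b s) (fun s => B s (x s) + b s) (Ioo 0 T) := by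
    intro r hr
    obtain ⟨T', hT'S, hrT'⟩ := exists_lt_of_lt_csSup ⟨0, h0S⟩ hr.2
    simp only [hy.eqOn_Icc hB hb hx hT'S.1 hT'S.2 ⟨hr.1.le, hrT'.le⟩]
  -- beyond `T` the integral in `hy` takes its junk value, so `y` is constant there
  have habove : EqOn (fun s => B s (y s) + b s) (fun s => B s (y 0) + b s) (Ioo T (T + 1)) := by
    intro r hr
    have hrS : r ∉ S := fun h => (le_csSup hbdd h).not_gt hr.1
    simp only [hy r (hT0.trans hr.1.le), intervalIntegral.integral_undef fun h =>
      hrS ⟨hT0.trans hr.1.le, h⟩, add_zero]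
  have hT1 : T + 1 ∈ S := by
    refine ⟨by linarith, IntervalIntegrable.trans (b := T) ?_ ?_⟩
    · exact (intervalIntegrable_iff_integrableOn_Ioo_of_le hT0).2
        ((integrable_apply_add hB hb x).integrableOn.congr_fun hbelow.symm measurableSet_Ioo)
    · exact (intervalIntegrable_iff_integrableOn_Ioo_of_le (by linarith)).2
        ((integrable_apply_add hB hb (.const ℝ (y 0))).integrableOn.congr_fun habove.symm
          measurableSet_Ioo)
  linarith [le_csSup hbdd hT1]

noncomputable def picardFrom (hB : Integrable B) (hb : Integrable b) (c : ℝ) (z : V)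
    (x : ℝ →ᵇ V) : ℝ →ᵇ V :=
  .ofNormedAddCommGroup (fun t => z + ∫ s in c..t, (B s (x s) + b s))
    (continuous_const.add (intervalIntegral.continuous_primitive
      (fun _ _ => (integrable_apply_add hB hb x).intervalIntegrable) c))
    (‖z‖ + ∫ s, ‖B s (x s) + b s‖) fun _ =>
      (norm_add_le _ _).trans (add_le_add le_rfl
        ((intervalIntegral.norm_integral_eq_norm_integral_uIoc _).trans_le
          (norm_setIntegral_le_integral_norm (integrable_apply_add hB hb x) _)))

noncomputable def picardTail (hB : Integrable B) (hb : Integrable b) (z : V)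
    (x : ℝ →ᵇ V) : ℝ →ᵇ V :=
  .ofNormedAddCommGroup (fun t => z - ∫ s in Ioi t, (B s (x s) + b s))
    (continuous_const.sub (integrable_apply_add hB hb x).continuous_integral_Ioi)
    (‖z‖ + ∫ s, ‖B s (x s) + b s‖) fun _ =>
      (norm_sub_le _ _).trans (add_le_add le_rfl
        (norm_setIntegral_le_integral_norm (integrable_apply_add hB hb x) _))

variable [CompleteSpace V]

theorem existsUnique_eq_add_integral (hB : Integrable B) (hb : Integrable b) (c : ℝ) (z : V) :
    ∃! x : ℝ →ᵇ V, ∀ t, x t = z + ∫ s in c..t, (B s (x s) + b s) := by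
  have h0 : 0 ≤ fun s => ‖B s‖ := fun _ => norm_nonneg _
  refine (existsUnique_congr fun x => ?_).1
    ((simplexBound_uIoc hB.norm h0 c).existsUnique_isFixedPt hB.norm h0
      (Φ := picardFrom hB hb c z) fun x y t => ?_)
  · simp [Function.IsFixedPt, BoundedContinuousFunction.ext_iff, picardFrom, eq_comm]
  · simp only [picardFrom, BoundedContinuousFunction.coe_ofNormedAddCommGroup,
      add_sub_add_left_eq_sub]
    rw [← intervalIntegral.integral_sub (integrable_apply_add hB hb x).intervalIntegrable
      (integrable_apply_add hB hb y).intervalIntegrable,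
      intervalIntegral.norm_integral_eq_norm_integral_uIoc]
    exact norm_integral_apply_add_sub_le
      (by simpa using integrable_norm_mul_norm hB.integrableOn (x - y))

theorem existsUnique_eq_sub_integral_Ioi (hB : Integrable B) (hb : Integrable b) (z : V) :
    ∃! x : ℝ →ᵇ V, ∀ t, x t = z - ∫ s in Ioi t, (B s (x s) + b s) := by
  have h0 : 0 ≤ fun s => ‖B s‖ := fun _ => norm_nonneg _
  refine (existsUnique_congr fun x => ?_).1
    ((simplexBound_Ioi hB.norm h0).existsUnique_isFixedPt hB.norm h0
      (Φ := picardTail hB hb z) fun x y t => ?_)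
  · simp [Function.IsFixedPt, BoundedContinuousFunction.ext_iff, picardTail, eq_comm]
  · simp only [picardTail, BoundedContinuousFunction.coe_ofNormedAddCommGroup,
      sub_sub_sub_cancel_left]
    rw [norm_sub_rev, ← integral_sub (integrable_apply_add hB hb x).integrableOn
      (integrable_apply_add hB hb y).integrableOn]
    exact norm_integral_apply_add_sub_le
      (by simpa using integrable_norm_mul_norm hB.integrableOn (x - y))

theorem IsIntegralSolution.exists_boundedContinuous_eqOn_Ici {y : ℝ → V}
    (hy : IsIntegralSolution B b y) (hB : Integrable B) (hb : Integrable b) :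
    ∃ x : ℝ →ᵇ V, (∀ t, x t = y 0 + ∫ s in (0 : ℝ)..t, (B s (x s) + b s)) ∧
      EqOn y x (Ici 0) :=
  have ⟨x, hx, _⟩ := existsUnique_eq_add_integral hB hb 0 (y 0)
  ⟨x, hx, hy.eqOn_Ici hB hb hx⟩

theorem exists_isIntegralSolution_apply_eq (hB : Integrable B) (hb : Integrable b) {c : ℝ}
    (hc : 0 ≤ c) (z : V) :
    ∃ x : ℝ →ᵇ V, IsIntegralSolution B b x ∧ (∃ L, Tendsto x atTop (𝓝 L)) ∧
      x c = z ∧ ∀ y, IsIntegralSolution B b y → y c = z → EqOn y x (Ici 0) := by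
  obtain ⟨x, hx, hxu⟩ := existsUnique_eq_add_integral hB hb c z
  have hF := integrable_apply_add hB hb x
  refine ⟨x, fun t _ => apply_eq_apply_add_integral hF hx 0 t,
    ⟨_, tendsto_of_eq_add_integral hF hx⟩, by simp [hx c], fun y hy hyc => ?_⟩
  obtain ⟨x', hx', hyx'⟩ := hy.exists_boundedContinuous_eqOn_Ici hB hb
  obtain rfl : x' = x := hxu x' fun t => by
    rw [apply_eq_apply_add_integral (integrable_apply_add hB hb x') hx' c t, ← hyx' hc, hyc]
  exact hyx'

theorem exists_isIntegralSolution_tendsto (hB : Integrable B) (hb : Integrable b) (z : V) :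
    ∃ x : ℝ →ᵇ V, IsIntegralSolution B b x ∧ Tendsto x atTop (𝓝 z) ∧
      ∀ y, IsIntegralSolution B b y → Tendsto y atTop (𝓝 z) → EqOn y x (Ici 0) := by
  obtain ⟨x, hx, hxu⟩ := existsUnique_eq_sub_integral_Ioi hB hb z
  have hF := integrable_apply_add hB hb x
  refine ⟨x, fun t _ => ?_, (tendsto_sub_integral_Ioi z).congr fun t => (hx t).symm,
    fun y hy hyz => ?_⟩
  · rw [hx t, hx 0, ← intervalIntegral.integral_Ioi_sub_Ioi' hF.integrableOn hF.integrableOn]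
    abel
  obtain ⟨x', hx', hyx'⟩ := hy.exists_boundedContinuous_eqOn_Ici hB hb
  have hF' := integrable_apply_add hB hb x'
  have hlim : y 0 + ∫ s in Ioi 0, (B s (x' s) + b s) = z :=
    tendsto_nhds_unique (tendsto_of_eq_add_integral hF' hx') <| hyz.congr' <|
      (eventually_ge_atTop 0).mono fun t ht => hyx' ht
  obtain rfl : x' = x := hxu x' fun t => by rw [apply_eq_sub_integral_Ioi hF' hx' t, hlim]
  exact hyx'

end LinearVolterra

theorem isIntegralSolution_indicator_Ici_iff {V : Type*} [NormedAddCommGroup V]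
    [NormedSpace ℝ V] {A : ℝ → V →L[ℝ] V} {a : ℝ → V} {y : ℝ → V} :
    IsIntegralSolution ((Ici 0).indicator A) ((Ici 0).indicator a) y ↔
      IsIntegralSolution A a y := by
  refine forall₂_congr fun t ht => ?_
  rw [intervalIntegral.integral_congr fun s hs => ?_]
  rw [uIcc_of_le ht] at hs
  simp [indicator_of_mem (show s ∈ Ici 0 from hs.1)]

/-- For `A`, `a` integrable on `[0,∞)`, every `z ∈ ℝⁿ` and every `τ ∈ [0,∞]` (including
`τ = ∞`), there is a unique Carathéodory solution (expressed in integral form) of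
`ẋ = A(t)x + a(t)` on `[0,∞)` belonging to `C_lim([0,∞),ℝⁿ)` with `x(τ) = z`
(for `τ = ∞` this means `lim_{t→∞} x(t) = z`). -/
theorem linear_ode_boundary_value (n : ℕ)
    (A : ℝ → (EuclideanSpace ℝ (Fin n) →L[ℝ] EuclideanSpace ℝ (Fin n)))
    (a : ℝ → EuclideanSpace ℝ (Fin n))
    (hA : IntegrableOn A (Ici (0:ℝ))) (ha : IntegrableOn a (Ici (0:ℝ)))
    (z : EuclideanSpace ℝ (Fin n)) (τ : ℝ≥0∞) :
    ∃ x : ℝ → EuclideanSpace ℝ (Fin n),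
      ((∀ t ≥ (0:ℝ), x t = x 0 + ∫ s in (0:ℝ)..t, (A s (x s) + a s)) ∧
        (∃ L, Tendsto x atTop (𝓝 L)) ∧
        (τ = ⊤ → Tendsto x atTop (𝓝 z)) ∧ (τ ≠ ⊤ → x τ.toReal = z)) ∧
      ∀ y : ℝ → EuclideanSpace ℝ (Fin n),
        ((∀ t ≥ (0:ℝ), y t = y 0 + ∫ s in (0:ℝ)..t, (A s (y s) + a s)) ∧
          (∃ L, Tendsto y atTop (𝓝 L)) ∧
          (τ = ⊤ → Tendsto y atTop (𝓝 z)) ∧ (τ ≠ ⊤ → y τ.toReal = z)) →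
        ∀ t ≥ (0:ℝ), y t = x t := by
  have hB := hA.integrable_indicator
    (ε' := EuclideanSpace ℝ (Fin n) →L[ℝ] EuclideanSpace ℝ (Fin n))
    measurableSet_Ici
  have hb := ha.integrable_indicator measurableSet_Ici
  rcases eq_or_ne τ ⊤ with rfl | hτ
  · obtain ⟨x, hx, hxz, huniq⟩ := exists_isIntegralSolution_tendsto hB hb z
    refine ⟨x, ⟨isIntegralSolution_indicator_Ici_iff.1 hx, ⟨z, hxz⟩, fun _ => hxz,
      fun h => (h rfl).elim⟩, fun y ⟨hy, _, hyz, _⟩ => ?_⟩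
    exact huniq y (isIntegralSolution_indicator_Ici_iff.2 hy) (hyz rfl)
  · obtain ⟨x, hx, hxL, hxz, huniq⟩ :=
      exists_isIntegralSolution_apply_eq hB hb ENNReal.toReal_nonneg (c := τ.toReal) z
    refine ⟨x, ⟨isIntegralSolution_indicator_Ici_iff.1 hx, hxL, fun h => (hτ h).elim,
      fun _ => hxz⟩, fun y ⟨hy, _, _, hyz⟩ => ?_⟩
    exact huniq y (isIntegralSolution_indicator_Ici_iff.2 hy) (hyz hτ)
end

section
/- (Generalized needle variation lemma for step functions) Let K ⊂ [0,∞) be compact with Lebesgue measure |K| > 0, and let y : K → ℝᵖ be a step function y(t) = Σ_{j=1}^m y_j χ_{A_j}(t) where {A₁,…,A_m} is a measurable partition of K, with C = max_j ‖y_j‖. For δ > 0, choose a partition {Δ₁,…,Δ_r} of K into measurable sets, ordered along the line, each of measure at most δ/(2C). For α ∈ [0,1] define M(α) = ⋃_{i,j} { t ∈ A_j ∩ Δ_i : ∫_0^t χ_{A_j∩Δ_i}(τ) dτ < α·|A_j ∩ Δ_i| }. Then: (i) |M(α)| = α|K|; (ii) α' ≤ α implies M(α') ⊆ M(α); (iii)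 for all t ∈ K and all 0 ≤ α' ≤ α ≤ 1, ‖∫_{[0,t]∩K} (χ_{M(α)}(τ) − χ_{M(α')}(τ)) y(τ) dτ − (α−α') ∫_{[0,t]∩K} y(τ) dτ‖ ≤ δ|α−α'|. -/
open MeasureTheory Filter Topology Set

/-!
On a cell `B = A_j ∩ Δ_i` the primitive `s ↦ |B ∩ [0, s]|` is continuous and nondecreasing, so
the points of `B` where it stays below `α |B|` form a set of measure exactly `α |B|`, increasing
in `α`. Summing over the cells gives `|M(α)| = α |K|`. For the estimate, the integrand is
a step function, so the error is a combination of the vectors `y_j` whose coefficients are the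
defects `|M(α) ∩ B ∩ [0, s]| - |M(α') ∩ B ∩ [0, s]| - (α - α') |B ∩ [0, s]|`. Such a defect
vanishes when `B` lies entirely left or right of `s`, which leaves the cells of the single `Δ_i`
with `s ∈ [t_{i-1}, t_i)`; each of their defects is at most `(α - α') |B|`, and these add up to at
most `(α - α') |Δ_i| C ≤ δ (α - α') / 2`.
-/

lemma indicator_one_smul_sum_indicator {X E ι : Type*} [AddCommMonoid E] [Module ℝ E]
    [Fintype ι] (W : Set X) (A : ι → Set X) (v : ι → E) (τ : X) :
    W.indicator (1 : X → ℝ) τ • ∑ j, (A j).indicator (fun _ => v j) τ =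
      ∑ j, (W ∩ A j).indicator (fun _ => v j) τ := by
  rw [Finset.smul_sum]
  refine Finset.sum_congr rfl fun j _ => ?_
  rw [← indicator_indicator]
  by_cases hτ : τ ∈ W <;> simp [hτ]

section StepFunction

variable {X E ι : Type*} [MeasurableSpace X] [NormedAddCommGroup E] [Fintype ι]
  {μ : Measure X} [IsFiniteMeasure μ] {B : ι → Set X}

lemma integrable_indicator_const_of_isFiniteMeasure {b : Set X} (hb : MeasurableSet b) (e : E) :
    Integrable (b.indicator fun _ => e) μ :=
  (integrable_indicator_iff hb).2 (integrableOn_const (measure_ne_top _ _))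

lemma integrable_sum_indicator_const (hB : ∀ j, MeasurableSet (B j)) (v : ι → E) :
    Integrable (fun τ => ∑ j, (B j).indicator (fun _ => v j) τ) μ :=
  integrable_finsetSum _ fun j _ => integrable_indicator_const_of_isFiniteMeasure (hB j) (v j)

lemma integral_sum_indicator_const [NormedSpace ℝ E] [CompleteSpace E]
    (hB : ∀ j, MeasurableSet (B j)) (v : ι → E) :
    ∫ τ, ∑ j, (B j).indicator (fun _ => v j) τ ∂μ = ∑ j, μ.real (B j) • v j := by
  rw [integral_finsetSum _ fun j _ => integrable_indicator_const_of_isFiniteMeasure (hB j) (v j)]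
  exact Finset.sum_congr rfl fun j _ => integral_indicator_const _ (hB j)

end StepFunction

lemma measureReal_iUnion_fintype₀ {X ι : Type*} [MeasurableSpace X] [Fintype ι]
    {μ : Measure X} [IsFiniteMeasure μ] {f : ι → Set X}
    (hd : Pairwise (Function.onFun (AEDisjoint μ) f)) (hm : ∀ i, NullMeasurableSet (f i) μ) :
    μ.real (⋃ i, f i) = ∑ i, μ.real (f i) := by
  simpa using measureReal_biUnion_finset₀ (s := Finset.univ) (hd.set_pairwise _) fun i _ => hm i

lemma measureReal_eq_sum_inter {X κ : Type*} [MeasurableSpace X] [Fintype κ] {μ ν : Measure X}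
    [IsFiniteMeasure ν] (hν : ν ≪ μ) {Δ : κ → Set X} (hΔm : ∀ i, MeasurableSet (Δ i))
    (hΔd : Pairwise (Function.onFun (AEDisjoint μ) Δ)) {S : Set X} (hS : MeasurableSet S)
    (hSΔ : S ⊆ ⋃ i, Δ i) : ν.real S = ∑ i, ν.real (S ∩ Δ i) := by
  conv_lhs => rw [← inter_eq_left.2 hSΔ, inter_iUnion]
  exact measureReal_iUnion_fintype₀
    (fun i i' h => hν ((hΔd h).mono inter_subset_right inter_subset_right))
    fun i => (hS.inter (hΔm i)).nullMeasurableSet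

lemma sum_measureReal_inter_eq {X ι : Type*} [MeasurableSpace X] [Fintype ι] {μ : Measure X}
    {A : ι → Set X} (hAm : ∀ j, MeasurableSet (A j)) (hAdisj : Pairwise (Function.onFun Disjoint A))
    {S : Set X} (hS : MeasurableSet S) (hSA : S ⊆ ⋃ j, A j) (hfin : μ S ≠ ⊤) :
    ∑ j, μ.real (A j ∩ S) = μ.real S := by
  conv_rhs => rw [← inter_eq_right.2 hSA, iUnion_inter]
  exact (measureReal_iUnion_fintype
    (fun j j' h => (hAdisj h).mono inter_subset_left inter_subset_left)
    (fun j => (hAm j).inter hS) fun j => measure_ne_top_of_subset inter_subset_right hfin).symm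

lemma norm_sum_sum_smul_le {ι κ E : Type*} [Fintype ι] [Fintype κ] [SeminormedAddCommGroup E]
    [NormedSpace ℝ E] (d : κ → ι → ℝ) (v : ι → E) {C : ℝ} (hv : ∀ j, ‖v j‖ ≤ C) :
    ‖∑ j, (∑ i, d i j) • v j‖ ≤ C * ∑ i, ∑ j, |d i j| := by
  calc ‖∑ j, (∑ i, d i j) • v j‖
      ≤ ∑ j, ‖(∑ i, d i j) • v j‖ := norm_sum_le _ _
    _ ≤ ∑ j, C * ∑ i, |d i j| := Finset.sum_le_sum fun j _ => by
        rw [norm_smul, Real.norm_eq_abs, mul_comm]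
        exact mul_le_mul (hv j) (Finset.abs_sum_le_sum_abs _ _) (abs_nonneg _)
          ((norm_nonneg _).trans (hv j))
    _ = C * ∑ i, ∑ j, |d i j| := by rw [← Finset.mul_sum, Finset.sum_comm]

lemma sum_le_of_support_subsingleton {κ : Type*} [Fintype κ] {f : κ → ℝ} {b : ℝ} (hb : 0 ≤ b)
    (hf : ∀ i, f i ≤ b) (hsupp : (Function.support f).Subsingleton) : ∑ i, f i ≤ b := by
  by_cases h : ∃ i, f i ≠ 0
  · obtain ⟨i₀, hi₀⟩ := h
    rw [Finset.sum_eq_single i₀ (fun i _ hi => by_contra fun h' => hi (hsupp h' hi₀))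
      (by simp)]
    exact hf i₀
  · push Not at h
    simpa [h] using hb

lemma integrable_indicator_one_of_measure_ne_top {B : Set ℝ} (hB : MeasurableSet B)
    (hfin : volume B ≠ ⊤) : Integrable (B.indicator (1 : ℝ → ℝ)) :=
  (integrable_indicator_iff hB).2 (integrableOn_const hfin)

lemma intervalIntegral_indicator_one_eq_measureReal {B : Set ℝ} (hB : MeasurableSet B)
    (hB0 : B ⊆ Ici 0) (hfin : volume B ≠ ⊤) (s : ℝ) :
    ∫ τ in (0:ℝ)..s, B.indicator 1 τ = volume.real (B ∩ Iic s) := by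
  have hIic (a : ℝ) : ∫ τ in Iic a, B.indicator 1 τ = volume.real (B ∩ Iic a) := by
    rw [integral_indicator_one hB, measureReal_restrict_apply hB]
  have hnull : volume (B ∩ Iic 0) = 0 :=
    (subsingleton_singleton.anti fun x hx => le_antisymm hx.2 (hB0 hx.1)).measure_zero _
  have hint := integrable_indicator_one_of_measure_ne_top hB hfin
  rw [← intervalIntegral.integral_Iic_sub_Iic hint.integrableOn hint.integrableOn, hIic, hIic,
    measureReal_def (s := B ∩ Iic 0), hnull, ENNReal.toReal_zero, sub_zero]

lemma Monotone.Iio_subset_of_isLUB_setOf_lt {F : ℝ → ℝ} (hF : Monotone F) {c u : ℝ}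
    (hu : IsLUB {s | F s < c} u) : Iio u ⊆ {s | F s < c} := fun x hx => by
  obtain ⟨y, hy, hxy⟩ := (lt_isLUB_iff hu).1 hx
  exact (hF hxy.le).trans_lt hy

lemma Monotone.apply_eq_of_isLUB_setOf_lt {F : ℝ → ℝ} (hF : Monotone F) (hFc : Continuous F)
    {c u : ℝ} (hu : IsLUB {s | F s < c} u) : F u = c := by
  apply le_antisymm
  · refine _root_.le_of_tendsto ((hFc.tendsto u).mono_left (nhdsWithin_le_nhds (s := Iio u))) ?_
    filter_upwards [self_mem_nhdsWithin] with x hx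
    exact (hF.Iio_subset_of_isLUB_setOf_lt hu hx).le
  · refine _root_.ge_of_tendsto ((hFc.tendsto u).mono_left (nhdsWithin_le_nhds (s := Ioi u))) ?_
    filter_upwards [self_mem_nhdsWithin] with x hx
    exact not_lt.1 fun h => (not_le.2 hx) (hu.1 h)

/-- The primitive `F` of `χ_B` is continuous and nondecreasing, so `{F < c}` is a half-line
`(-∞, u)` with `F u = c`, and `B ∩ (-∞, u)` has measure `F u`. -/
lemma volume_setOf_intervalIntegral_indicator_lt {B : Set ℝ} (hB : MeasurableSet B)
    (hB0 : B ⊆ Ici 0) (hfin : volume B ≠ ⊤) {c : ℝ} (hc : c ≤ volume.real B) :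
    volume {s ∈ B | ∫ τ in (0:ℝ)..s, B.indicator 1 τ < c} = ENNReal.ofReal c := by
  set F := fun s => ∫ τ in (0:ℝ)..s, B.indicator (1 : ℝ → ℝ) τ
  have hF : ∀ s, F s = volume.real (B ∩ Iic s) :=
    intervalIntegral_indicator_one_eq_measureReal hB hB0 hfin
  have hFc : Continuous F :=
    (integrable_indicator_one_of_measure_ne_top hB hfin).continuous_primitive 0
  have hFm : Monotone F := fun a b hab => by
    simp only [hF]
    exact measureReal_mono (inter_subset_inter_right _ (Iic_subset_Iic.2 hab))
      (measure_ne_top_of_subset inter_subset_left hfin)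
  change volume (B ∩ {s | F s < c}) = _
  rcases le_or_gt c 0 with hc0 | hc0
  · have : {s | F s < c} = ∅ :=
      eq_empty_of_forall_notMem fun s hs => (hc0.trans (hF s ▸ measureReal_nonneg)).not_gt hs
    simp [this, ENNReal.ofReal_of_nonpos hc0]
  by_cases hbdd : BddAbove {s | F s < c}
  · have hne : (-1 : ℝ) ∈ {s | F s < c} := by
      have : B ∩ Iic (-1) = ∅ :=
        eq_empty_of_forall_notMem fun x hx => by linarith [mem_Ici.1 (hB0 hx.1), mem_Iic.1 hx.2]
      simpa [hF, this] using hc0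
    have hu := isLUB_csSup ⟨_, hne⟩ hbdd
    have hvol : volume (B ∩ {s | F s < c}) = volume (B ∩ Iic (sSup {s | F s < c})) := by
      refine le_antisymm (measure_mono (inter_subset_inter_right _ fun x hx => hu.1 hx)) ?_
      rw [← measure_congr ((ae_eq_refl B).inter Iio_ae_eq_Iic)]
      exact measure_mono (inter_subset_inter_right _ (hFm.Iio_subset_of_isLUB_setOf_lt hu))
    rw [hvol, ← ofReal_measureReal (measure_ne_top_of_subset inter_subset_left hfin), ← hF,
      hFm.apply_eq_of_isLUB_setOf_lt hFc hu]
  · have hall : ∀ x, F x < c := fun x => by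
      obtain ⟨y, hy, hxy⟩ := not_bddAbove_iff.1 hbdd x
      exact (hFm hxy.le).trans_lt hy
    have hle : volume B ≤ ENNReal.ofReal c := by
      refine _root_.le_of_tendsto' (Measure.restrict_apply_univ B ▸
        tendsto_measure_Iic_atTop (volume.restrict B)) fun x => ?_
      rw [Measure.restrict_apply measurableSet_Iic, inter_comm,
        ← ofReal_measureReal (measure_ne_top_of_subset inter_subset_left hfin), ← hF]
      exact ENNReal.ofReal_le_ofReal (hall x).le
    simp only [hall, ofPred_true, inter_univ]
    exact le_antisymm hle (ENNReal.ofReal_le_of_le_toReal hc)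

def needleSet (B : Set ℝ) (α : ℝ) : Set ℝ :=
  {s ∈ B | ∫ τ in (0:ℝ)..s, B.indicator (1 : ℝ → ℝ) τ < α * volume.real B}

lemma needleSet_subset (B : Set ℝ) (α : ℝ) : needleSet B α ⊆ B := sep_subset _ _

lemma needleSet_mono (B : Set ℝ) : Monotone (needleSet B) := fun _ _ h _ hs =>
  ⟨hs.1, hs.2.trans_le (mul_le_mul_of_nonneg_right h measureReal_nonneg)⟩

lemma measurableSet_needleSet {B : Set ℝ} (hB : MeasurableSet B) (hfin : volume B ≠ ⊤) (α : ℝ) :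
    MeasurableSet (needleSet B α) :=
  hB.inter <| measurableSet_lt
    ((integrable_indicator_one_of_measure_ne_top hB hfin).continuous_primitive 0).measurable
    measurable_const

lemma volume_needleSet {B : Set ℝ} (hB : MeasurableSet B) (hB0 : B ⊆ Ici 0)
    (hfin : volume B ≠ ⊤) {α : ℝ} (hα0 : 0 ≤ α) (hα1 : α ≤ 1) :
    volume (needleSet B α) = ENNReal.ofReal α * volume B := by
  rw [needleSet, volume_setOf_intervalIntegral_indicator_lt hB hB0 hfin
      (mul_le_of_le_one_left measureReal_nonneg hα1),
    ENNReal.ofReal_mul hα0, ofReal_measureReal hfin]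

lemma measureReal_needleSet {B : Set ℝ} (hB : MeasurableSet B) (hB0 : B ⊆ Ici 0)
    (hfin : volume B ≠ ⊤) {α : ℝ} (hα0 : 0 ≤ α) (hα1 : α ≤ 1) :
    volume.real (needleSet B α) = α * volume.real B := by
  rw [measureReal_def, volume_needleSet hB hB0 hfin hα0 hα1, ENNReal.toReal_mul,
    ENNReal.toReal_ofReal hα0, measureReal_def]

lemma volume_iUnion_needleSet {ι : Type*} [Fintype ι] {B : ι → Set ℝ}
    (hB : ∀ k, MeasurableSet (B k)) (hB0 : ∀ k, B k ⊆ Ici 0) (hfin : ∀ k, volume (B k) ≠ ⊤)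
    (hd : Pairwise (Function.onFun (AEDisjoint volume) B)) {α : ℝ} (hα0 : 0 ≤ α) (hα1 : α ≤ 1) :
    volume (⋃ k, needleSet (B k) α) = ENNReal.ofReal α * volume (⋃ k, B k) := by
  rw [measure_iUnion₀ (hd.mono fun _ _ h => h.mono (needleSet_subset _ _) (needleSet_subset _ _))
      fun k => (measurableSet_needleSet (hB k) (hfin k) α).nullMeasurableSet,
    measure_iUnion₀ hd fun k => (hB k).nullMeasurableSet, tsum_fintype, tsum_fintype,
    Finset.mul_sum]
  exact Finset.sum_congr rfl fun k _ => volume_needleSet (hB k) (hB0 k) (hfin k) hα0 hα1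

def needleDefect (ν : Measure ℝ) (B : Set ℝ) (α α' : ℝ) : ℝ :=
  ν.real (needleSet B α) - ν.real (needleSet B α') - (α - α') * ν.real B

lemma needleDefect_restrict_of_subset {T B : Set ℝ} (hT : MeasurableSet T) (hBT : B ⊆ T)
    (hB : MeasurableSet B) (hB0 : B ⊆ Ici 0) (hfin : volume B ≠ ⊤) {α α' : ℝ}
    (hα0 : 0 ≤ α) (hα1 : α ≤ 1) (hα'0 : 0 ≤ α') (hα'1 : α' ≤ 1) :
    needleDefect (volume.restrict T) B α α' = 0 := by
  have hrestrict {X : Set ℝ} (hX : X ⊆ B) : (volume.restrict T).real X = volume.real X := by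
    rw [measureReal_restrict_apply' hT, inter_eq_left.2 (hX.trans hBT)]
  rw [needleDefect, hrestrict (needleSet_subset B α), hrestrict (needleSet_subset B α'),
    hrestrict subset_rfl, measureReal_needleSet hB hB0 hfin hα0 hα1,
    measureReal_needleSet hB hB0 hfin hα'0 hα'1]
  ring

lemma needleDefect_restrict_of_disjoint {T B : Set ℝ} (hT : MeasurableSet T)
    (hBT : Disjoint B T) (α α' : ℝ) : needleDefect (volume.restrict T) B α α' = 0 := by
  have hnull {X : Set ℝ} (hX : X ⊆ B) : (volume.restrict T).real X = 0 := by
    rw [measureReal_restrict_apply' hT, (hBT.mono_left hX).inter_eq, measureReal_empty]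
  rw [needleDefect, hnull (needleSet_subset B α), hnull (needleSet_subset B α'),
    hnull subset_rfl]
  ring

/-- Both `ν(needleSet B α \ needleSet B α')` and `(α - α') ν(B)` lie between `0` and
`(α - α') |B|`. -/
lemma abs_needleDefect_le {ν : Measure ℝ} (hν : ν ≤ volume) {B : Set ℝ} (hB : MeasurableSet B)
    (hB0 : B ⊆ Ici 0) (hfin : volume B ≠ ⊤) {α α' : ℝ} (hα'0 : 0 ≤ α') (hα'α : α' ≤ α)
    (hα1 : α ≤ 1) :
    |needleDefect ν B α α'| ≤ (α - α') * volume.real B := by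
  have hα0 : 0 ≤ α := hα'0.trans hα'α
  have hle {X : Set ℝ} (hX : X ⊆ B) : ν.real X ≤ volume.real X :=
    ENNReal.toReal_mono (measure_ne_top_of_subset hX hfin) (Measure.le_iff'.1 hν X)
  have hνfin : ν B ≠ ⊤ := ne_top_of_le_ne_top hfin (Measure.le_iff'.1 hν B)
  have hsub := needleSet_mono B hα'α
  have hPm := measurableSet_needleSet hB hfin α'
  have hdiff : ν.real (needleSet B α) - ν.real (needleSet B α') =
      ν.real (needleSet B α \ needleSet B α') :=
    (measureReal_sdiff hsub hPm (measure_ne_top_of_subset (needleSet_subset B α) hνfin)).symm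
  have hdiff_le : ν.real (needleSet B α \ needleSet B α') ≤ (α - α') * volume.real B := by
    calc ν.real (needleSet B α \ needleSet B α')
        ≤ volume.real (needleSet B α \ needleSet B α') :=
          hle (sdiff_subset.trans (needleSet_subset B α))
      _ = (α - α') * volume.real B := by
          rw [measureReal_sdiff hsub hPm (measure_ne_top_of_subset (needleSet_subset B α) hfin),
            measureReal_needleSet hB hB0 hfin hα0 hα1,
            measureReal_needleSet hB hB0 hfin hα'0 (hα'α.trans hα1)]
          ring
  rw [needleDefect, hdiff]
  exact abs_sub_le_of_nonneg_of_le measureReal_nonneg hdiff_le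
    (mul_nonneg (sub_nonneg.2 hα'α) measureReal_nonneg)
    (mul_le_mul_of_nonneg_left (hle subset_rfl) (sub_nonneg.2 hα'α))

lemma needleDefect_restrict_eq_zero_of_notMem_Ico {K B : Set ℝ} (hK : MeasurableSet K)
    (hK0 : K ⊆ Ici 0) {a b s : ℝ} (hBab : B ⊆ Icc a b ∩ K) (hs : s ∉ Ico a b)
    (hB : MeasurableSet B) (hfin : volume B ≠ ⊤) {α α' : ℝ} (hα0 : 0 ≤ α) (hα1 : α ≤ 1)
    (hα'0 : 0 ≤ α') (hα'1 : α' ≤ 1) :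
    needleDefect (volume.restrict (Icc 0 s ∩ K)) B α α' = 0 := by
  have hB0 : B ⊆ Ici 0 := fun x hx => hK0 (hBab hx).2
  rcases le_or_gt b s with hbs | hsb
  · refine needleDefect_restrict_of_subset (measurableSet_Icc.inter hK) (fun x hx => ?_)
      hB hB0 hfin hα0 hα1 hα'0 hα'1
    exact ⟨⟨hB0 hx, (hBab hx).1.2.trans hbs⟩, (hBab hx).2⟩
  · have hsa : s < a := not_le.1 fun has => hs ⟨has, hsb⟩
    refine needleDefect_restrict_of_disjoint (measurableSet_Icc.inter hK)
      (disjoint_left.2 fun x hx hxT => ?_) α α'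
    linarith [(hBab hx).1.1, hxT.1.2]

section SortedPartition

variable {r : ℕ} {t : Fin (r + 1) → ℝ}

lemma Monotone.apply_succ_le_apply_castSucc (ht : Monotone t) {i i' : Fin r} (h : i < i') :
    t i.succ ≤ t i'.castSucc :=
  ht (Fin.succ_le_castSucc_iff.2 h)

lemma Monotone.pairwise_aedisjoint_Icc (ht : Monotone t) :
    Pairwise (Function.onFun (AEDisjoint volume) fun i : Fin r =>
      Icc (t i.castSucc) (t i.succ)) := by
  refine Pairwise.of_lt fun i i' h => Set.Subsingleton.measure_zero ?_ _
  refine subsingleton_singleton (a := t i.succ) |>.anti fun x hx => ?_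
  exact le_antisymm hx.1.2 ((ht.apply_succ_le_apply_castSucc h).trans hx.2.1)

lemma Monotone.pairwise_disjoint_Ico (ht : Monotone t) :
    Pairwise (Function.onFun Disjoint fun i : Fin r => Ico (t i.castSucc) (t i.succ)) :=
  Pairwise.of_lt fun _ _ h => Ico_disjoint_Ico.2
    ((min_le_left _ _).trans ((ht.apply_succ_le_apply_castSucc h).trans (le_max_right _ _)))

end SortedPartition

/-- The set `M(α)` of the needle variation. -/
def needleUnion {ι κ : Type*} (A : ι → Set ℝ) (Δ : κ → Set ℝ) (α : ℝ) : Set ℝ :=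
  ⋃ i, ⋃ j, needleSet (A j ∩ Δ i) α

section NeedleUnion

variable {ι κ : Type*} {A : ι → Set ℝ} {Δ : κ → Set ℝ}

lemma needleUnion_mono (A : ι → Set ℝ) (Δ : κ → Set ℝ) : Monotone (needleUnion A Δ) :=
  fun _ _ h => iUnion₂_mono fun _ _ => needleSet_mono _ h

lemma needleUnion_inter (hAdisj : Pairwise (Function.onFun Disjoint A)) (α : ℝ) (j : ι) :
    needleUnion A Δ α ∩ A j = ⋃ i, needleSet (A j ∩ Δ i) α := by
  ext x
  simp only [needleUnion, mem_inter_iff, mem_iUnion]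
  constructor
  · rintro ⟨⟨i, j', hx⟩, hxA⟩
    obtain rfl : j' = j := by
      by_contra h
      exact disjoint_left.1 (hAdisj h) (needleSet_subset _ _ hx).1 hxA
    exact ⟨i, hx⟩
  · rintro ⟨i, hx⟩
    exact ⟨⟨i, j, hx⟩, (needleSet_subset _ _ hx).1⟩

variable [Fintype κ]

lemma measurableSet_needleUnion [Fintype ι] (hAm : ∀ j, MeasurableSet (A j))
    (hΔm : ∀ i, MeasurableSet (Δ i)) (hΔfin : ∀ i, volume (Δ i) ≠ ⊤) (α : ℝ) :
    MeasurableSet (needleUnion A Δ α) :=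
  .iUnion fun i => .iUnion fun j => measurableSet_needleSet ((hAm j).inter (hΔm i))
    (measure_ne_top_of_subset inter_subset_right (hΔfin i)) α

lemma volume_needleUnion [Fintype ι] (hAm : ∀ j, MeasurableSet (A j))
    (hAdisj : Pairwise (Function.onFun Disjoint A)) (hΔm : ∀ i, MeasurableSet (Δ i))
    (hΔd : Pairwise (Function.onFun (AEDisjoint volume) Δ)) (hΔfin : ∀ i, volume (Δ i) ≠ ⊤)
    (hΔ0 : ∀ i, Δ i ⊆ Ici 0) (hΔA : ∀ i, Δ i ⊆ ⋃ j, A j) {α : ℝ} (hα0 : 0 ≤ α) (hα1 : α ≤ 1) :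
    volume (needleUnion A Δ α) = ENNReal.ofReal α * volume (⋃ i, Δ i) := by
  have hd : Pairwise (Function.onFun (AEDisjoint volume) fun p : κ × ι => A p.2 ∩ Δ p.1) := by
    rintro ⟨i, j⟩ ⟨i', j'⟩ h
    by_cases hj : j = j'
    · subst hj
      have hi : i ≠ i' := fun hi => h (by rw [hi])
      exact (hΔd hi).mono inter_subset_right inter_subset_right
    · exact ((hAdisj hj).mono inter_subset_left inter_subset_left).aedisjoint
  have hcells : ⋃ p : κ × ι, A p.2 ∩ Δ p.1 = ⋃ i, Δ i := by
    rw [iUnion_prod']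
    exact iUnion_congr fun i => by dsimp only; rw [← iUnion_inter, inter_eq_right.2 (hΔA i)]
  rw [needleUnion, ← hcells, ← iUnion_prod' fun p : κ × ι => needleSet (A p.2 ∩ Δ p.1) α]
  exact volume_iUnion_needleSet (fun p : κ × ι => (hAm p.2).inter (hΔm p.1))
    (fun p => inter_subset_right.trans (hΔ0 p.1))
    (fun p => measure_ne_top_of_subset inter_subset_right (hΔfin p.1)) hd hα0 hα1

variable {ν : Measure ℝ} [IsFiniteMeasure ν]

lemma measureReal_needleUnion_inter (hν : ν ≪ volume) (hAm : ∀ j, MeasurableSet (A j))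
    (hAdisj : Pairwise (Function.onFun Disjoint A)) (hΔm : ∀ i, MeasurableSet (Δ i))
    (hΔd : Pairwise (Function.onFun (AEDisjoint volume) Δ)) (hΔfin : ∀ i, volume (Δ i) ≠ ⊤)
    (α : ℝ) (j : ι) :
    ν.real (needleUnion A Δ α ∩ A j) = ∑ i, ν.real (needleSet (A j ∩ Δ i) α) := by
  have hsub (i : κ) : needleSet (A j ∩ Δ i) α ⊆ Δ i :=
    (needleSet_subset _ _).trans inter_subset_right
  rw [needleUnion_inter hAdisj]
  exact measureReal_iUnion_fintype₀ (fun i i' h => hν ((hΔd h).mono (hsub i) (hsub i')))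
    fun i => (measurableSet_needleSet ((hAm j).inter (hΔm i))
      (measure_ne_top_of_subset inter_subset_right (hΔfin i)) α).nullMeasurableSet

lemma integral_needleUnion_sub_eq_sum_needleDefect [Fintype ι] {E : Type*}
    [NormedAddCommGroup E] [NormedSpace ℝ E] [CompleteSpace E] (hν : ν ≪ volume)
    (hAm : ∀ j, MeasurableSet (A j)) (hAdisj : Pairwise (Function.onFun Disjoint A))
    (hΔm : ∀ i, MeasurableSet (Δ i)) (hΔd : Pairwise (Function.onFun (AEDisjoint volume) Δ))
    (hΔfin : ∀ i, volume (Δ i) ≠ ⊤) (hAΔ : ∀ j, A j ⊆ ⋃ i, Δ i) (v : ι → E) (α α' : ℝ) :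
    (∫ τ, ((needleUnion A Δ α).indicator (1 : ℝ → ℝ) τ - (needleUnion A Δ α').indicator 1 τ) •
        ∑ j, (A j).indicator (fun _ => v j) τ ∂ν) -
      (α - α') • ∫ τ, ∑ j, (A j).indicator (fun _ => v j) τ ∂ν =
      ∑ j, (∑ i, needleDefect ν (A j ∩ Δ i) α α') • v j := by
  have hMAm (β : ℝ) (j : ι) : MeasurableSet (needleUnion A Δ β ∩ A j) :=
    (measurableSet_needleUnion hAm hΔm hΔfin β).inter (hAm j)
  have hpt (τ : ℝ) : ((needleUnion A Δ α).indicator (1 : ℝ → ℝ) τ -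
      (needleUnion A Δ α').indicator 1 τ) • ∑ j, (A j).indicator (fun _ => v j) τ =
      ∑ j, (needleUnion A Δ α ∩ A j).indicator (fun _ => v j) τ -
        ∑ j, (needleUnion A Δ α' ∩ A j).indicator (fun _ => v j) τ := by
    rw [sub_smul, indicator_one_smul_sum_indicator, indicator_one_smul_sum_indicator]
  simp only [hpt]
  rw [integral_sub (integrable_sum_indicator_const (hMAm α) v)
      (integrable_sum_indicator_const (hMAm α') v),
    integral_sum_indicator_const (hMAm α), integral_sum_indicator_const (hMAm α'),
    integral_sum_indicator_const hAm, Finset.smul_sum, ← Finset.sum_sub_distrib,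
    ← Finset.sum_sub_distrib]
  refine Finset.sum_congr rfl fun j _ => ?_
  rw [smul_smul, ← sub_smul, ← sub_smul,
    measureReal_needleUnion_inter hν hAm hAdisj hΔm hΔd hΔfin,
    measureReal_needleUnion_inter hν hAm hAdisj hΔm hΔd hΔfin,
    measureReal_eq_sum_inter hν hΔm hΔd (hAm j) (hAΔ j), Finset.mul_sum,
    ← Finset.sum_sub_distrib, ← Finset.sum_sub_distrib]
  rfl

end NeedleUnion

theorem norm_integral_needleUnion_sub_le {p m r : ℕ} {K : Set ℝ} (hKm : MeasurableSet K)
    (hKfin : volume K ≠ ⊤) (hK0 : K ⊆ Ici 0) {yv : Fin m → EuclideanSpace ℝ (Fin p)}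
    {A : Fin m → Set ℝ} (hAm : ∀ j, MeasurableSet (A j))
    (hAdisj : Pairwise (Function.onFun Disjoint A)) (hAcover : ⋃ j, A j = K)
    {C δ : ℝ} (hyv : ∀ j, ‖yv j‖ ≤ C) (hCpos : 0 < C) (hδ : 0 ≤ δ)
    {t : Fin (r + 1) → ℝ} (ht : Monotone t) {Δ : Fin r → Set ℝ}
    (hΔ : ∀ i : Fin r, Δ i ⊆ Icc (t i.castSucc) (t i.succ) ∩ K) (hΔm : ∀ i, MeasurableSet (Δ i))
    (hΔd : Pairwise (Function.onFun (AEDisjoint volume) Δ)) (hΔcover : ⋃ i, Δ i = K)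
    (hΔsmall : ∀ i, volume.real (Δ i) ≤ δ / (2 * C)) (s : ℝ) {α α' : ℝ} (hα'0 : 0 ≤ α')
    (hα'α : α' ≤ α) (hα1 : α ≤ 1) :
    ‖(∫ τ in Icc 0 s ∩ K, ((needleUnion A Δ α).indicator (1 : ℝ → ℝ) τ -
          (needleUnion A Δ α').indicator 1 τ) • ∑ j, (A j).indicator (fun _ => yv j) τ) -
        (α - α') • ∫ τ in Icc 0 s ∩ K, ∑ j, (A j).indicator (fun _ => yv j) τ‖ ≤
      δ * |α - α'| := by
  have hα0 : 0 ≤ α := hα'0.trans hα'α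
  have : IsFiniteMeasure (volume.restrict (Icc 0 s ∩ K)) :=
    isFiniteMeasure_restrict.2 (measure_ne_top_of_subset inter_subset_right hKfin)
  have hΔK (i : Fin r) : Δ i ⊆ K := (hΔ i).trans inter_subset_right
  have hΔfin (i : Fin r) : volume (Δ i) ≠ ⊤ := measure_ne_top_of_subset (hΔK i) hKfin
  have hcell (i : Fin r) (j : Fin m) : A j ∩ Δ i ⊆ Icc (t i.castSucc) (t i.succ) ∩ K :=
    inter_subset_right.trans (hΔ i)
  set d := fun i j => needleDefect (volume.restrict (Icc 0 s ∩ K)) (A j ∩ Δ i) α α'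
  have hrow (i : Fin r) : ∑ j, |d i j| ≤ (α - α') * (δ / (2 * C)) := calc
    ∑ j, |d i j| ≤ ∑ j, (α - α') * volume.real (A j ∩ Δ i) := Finset.sum_le_sum fun j _ =>
        abs_needleDefect_le Measure.restrict_le_self ((hAm j).inter (hΔm i))
          ((hcell i j).trans (inter_subset_right.trans hK0))
          (measure_ne_top_of_subset inter_subset_right (hΔfin i)) hα'0 hα'α hα1
    _ = (α - α') * volume.real (Δ i) := by
        rw [← Finset.mul_sum, sum_measureReal_inter_eq hAm hAdisj (hΔm i)
          (hAcover ▸ hΔK i) (hΔfin i)]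
    _ ≤ (α - α') * (δ / (2 * C)) := mul_le_mul_of_nonneg_left (hΔsmall i) (sub_nonneg.2 hα'α)
  have hsupp : (Function.support fun i => ∑ j, |d i j|).Subsingleton := by
    refine Set.Subsingleton.anti (t := {i | s ∈ Ico (t i.castSucc) (t i.succ)})
      (fun i hi i' hi' => by_contra fun h => disjoint_left.1 (ht.pairwise_disjoint_Ico h) hi hi')
      fun i hi => by_contra fun hs => hi (Finset.sum_eq_zero fun j _ => abs_eq_zero.2 ?_)
    exact needleDefect_restrict_eq_zero_of_notMem_Ico hKm hK0 (hcell i j) hs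
      ((hAm j).inter (hΔm i)) (measure_ne_top_of_subset inter_subset_right (hΔfin i))
      hα0 hα1 hα'0 (hα'α.trans hα1)
  rw [integral_needleUnion_sub_eq_sum_needleDefect
    (Measure.absolutelyContinuous_of_le Measure.restrict_le_self) hAm hAdisj hΔm hΔd hΔfin
    (fun j => hΔcover ▸ hAcover ▸ subset_iUnion A j)]
  calc _ ≤ C * ∑ i, ∑ j, |d i j| := norm_sum_sum_smul_le d yv hyv
    _ ≤ C * ((α - α') * (δ / (2 * C))) := mul_le_mul_of_nonneg_left
        (sum_le_of_support_subsingleton (by have := sub_nonneg.2 hα'α; positivity) hrow hsupp)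
        hCpos.le
    _ ≤ δ * |α - α'| := by
        rw [abs_of_nonneg (sub_nonneg.2 hα'α)]
        field_simp
        nlinarith [mul_nonneg hδ (sub_nonneg.2 hα'α)]

theorem needle_variation_step_general (p m r : ℕ)
    (K : Set ℝ) (hK : IsCompact K) (hK0 : K ⊆ Ici (0:ℝ))
    (yv : Fin m → EuclideanSpace ℝ (Fin p)) (A : Fin m → Set ℝ)
    (hAm : ∀ j, MeasurableSet (A j))
    (hAdisj : Pairwise (Function.onFun Disjoint A))
    (hAcover : (⋃ j, A j) = K)
    (C : ℝ) (hC : C = ⨆ j, ‖yv j‖) (hCpos : 0 < C)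
    (δ : ℝ) (hδ : 0 < δ)
    (t : Fin (r + 1) → ℝ) (ht : Monotone t)
    (Δ : Fin r → Set ℝ)
    (hΔ : ∀ i : Fin r, Δ i = Icc (t i.castSucc) (t i.succ) ∩ K)
    (hΔcover : (⋃ i, Δ i) = K)
    (hΔsmall : ∀ i, (volume (Δ i)).toReal ≤ δ / (2 * C))
    (y : ℝ → EuclideanSpace ℝ (Fin p))
    (hy : ∀ τ, y τ = ∑ j, (A j).indicator (fun _ => yv j) τ)
    (M : ℝ → Set ℝ)
    (hM : ∀ α, M α = ⋃ i : Fin r, ⋃ j : Fin m,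
      {s ∈ A j ∩ Δ i |
        (∫ τ in (0:ℝ)..s, (A j ∩ Δ i).indicator (1 : ℝ → ℝ) τ) <
          α * (volume (A j ∩ Δ i)).toReal}) :
    (∀ α ∈ Icc (0:ℝ) 1, volume (M α) = ENNReal.ofReal α * volume K) ∧
    (∀ α α' : ℝ, 0 ≤ α' → α' ≤ α → α ≤ 1 → M α' ⊆ M α) ∧
    (∀ s ∈ K, ∀ α α' : ℝ, 0 ≤ α' → α' ≤ α → α ≤ 1 →
      ‖(∫ τ in Icc 0 s ∩ K,
          (((M α).indicator (1 : ℝ → ℝ) τ - (M α').indicator (1 : ℝ → ℝ) τ) • y τ)) -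
        (α - α') • ∫ τ in Icc 0 s ∩ K, y τ‖ ≤ δ * |α - α'|) := by
  obtain rfl : M = needleUnion A Δ := funext hM
  obtain rfl : y = fun τ => ∑ j, (A j).indicator (fun _ => yv j) τ := funext hy
  have hKm : MeasurableSet K := hK.isClosed.measurableSet
  have hKfin : volume K ≠ ⊤ := hK.measure_lt_top.ne
  have hΔK (i : Fin r) : Δ i ⊆ K := hΔ i ▸ inter_subset_right
  have hΔm (i : Fin r) : MeasurableSet (Δ i) := hΔ i ▸ measurableSet_Icc.inter hKm
  have hΔd : Pairwise (Function.onFun (AEDisjoint volume) Δ) := fun i i' h => by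
    simp only [Function.onFun, hΔ]
    exact (ht.pairwise_aedisjoint_Icc h).mono inter_subset_left inter_subset_left
  have hyv (j : Fin m) : ‖yv j‖ ≤ C :=
    hC ▸ le_ciSup (f := fun j => ‖yv j‖) (finite_range _).bddAbove j
  refine ⟨fun α hα => ?_, fun α α' _ h _ => needleUnion_mono A Δ h,
    fun s _ α α' hα'0 hα'α hα1 => norm_integral_needleUnion_sub_le hKm hKfin hK0 hAm hAdisj
      hAcover hyv hCpos hδ.le ht (fun i => (hΔ i).subset) hΔm hΔd hΔcover hΔsmall s hα'0 hα'α hα1⟩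
  rw [volume_needleUnion hAm hAdisj hΔm hΔd (fun i => measure_ne_top_of_subset (hΔK i) hKfin)
    (fun i => (hΔK i).trans hK0) (fun i => hAcover ▸ hΔK i) hα.1 hα.2, hΔcover]

/-- Generalized needle variation lemma for step functions: for a step function
`y = Σ_j y_j χ_{A_j}` on a compact set `K ⊆ [0,∞)` of positive measure, given a sorted
partition `Δ_i = [t_{i−1},t_i] ∩ K` of `K` into pieces of measure at most `δ/(2C)`
(`C = max_j ‖y_j‖`), the sets
`M(α) = ⋃_{i,j} {s ∈ A_j ∩ Δ_i : ∫_0^s χ_{A_j∩Δ_i} < α·|A_j∩Δ_i|}` satisfy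
(i) `|M(α)| = α|K|`, (ii) monotonicity in `α`, and (iii) the needle variation estimate. -/
theorem needle_variation_step (p m r : ℕ) (hm : 0 < m)
    (K : Set ℝ) (hK : IsCompact K) (hK0 : K ⊆ Ici (0:ℝ)) (hKpos : 0 < volume K)
    (yv : Fin m → EuclideanSpace ℝ (Fin p)) (A : Fin m → Set ℝ)
    (hAm : ∀ j, MeasurableSet (A j))
    (hAdisj : Pairwise (Function.onFun Disjoint A))
    (hAcover : (⋃ j, A j) = K)
    (C : ℝ) (hC : C = ⨆ j, ‖yv j‖) (hCpos : 0 < C)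
    (δ : ℝ) (hδ : 0 < δ)
    (t : Fin (r + 1) → ℝ) (ht : Monotone t)
    (Δ : Fin r → Set ℝ)
    (hΔ : ∀ i : Fin r, Δ i = Icc (t i.castSucc) (t i.succ) ∩ K)
    (hΔcover : (⋃ i, Δ i) = K)
    (hΔsmall : ∀ i, (volume (Δ i)).toReal ≤ δ / (2 * C))
    (y : ℝ → EuclideanSpace ℝ (Fin p))
    (hy : ∀ τ, y τ = ∑ j, (A j).indicator (fun _ => yv j) τ)
    (M : ℝ → Set ℝ)
    (hM : ∀ α, M α = ⋃ i : Fin r, ⋃ j : Fin m,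
      {s ∈ A j ∩ Δ i |
        (∫ τ in (0:ℝ)..s, (A j ∩ Δ i).indicator (1 : ℝ → ℝ) τ) <
          α * (volume (A j ∩ Δ i)).toReal}) :
    (∀ α ∈ Icc (0:ℝ) 1, volume (M α) = ENNReal.ofReal α * volume K) ∧
    (∀ α α' : ℝ, 0 ≤ α' → α' ≤ α → α ≤ 1 → M α' ⊆ M α) ∧
    (∀ s ∈ K, ∀ α α' : ℝ, 0 ≤ α' → α' ≤ α → α ≤ 1 →
      ‖(∫ τ in Icc 0 s ∩ K,
          (((M α).indicator (1 : ℝ → ℝ) τ - (M α').indicator (1 : ℝ → ℝ) τ) • y τ)) -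
        (α - α') • ∫ τ in Icc 0 s ∩ K, y τ‖ ≤ δ * |α - α'|) :=
  needle_variation_step_general p m r K hK hK0 yv A hAm hAdisj hAcover C hC hCpos δ hδ t ht Δ hΔ
    hΔcover hΔsmall y hy M hM
end
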